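/- arXiv:quant-ph/0610031 — 4 statements merged into one kernel-verified Lean document; each statement's English description precedes it below -/
import Mathlib

section
/- Let n be odd and let ρ be a density state on H. Then the operator Δ(ρ) = Σ_{A ⊊ N} (−1)^{|A|} (Tr_{N∖A} ρ) ⊗ 1_{N∖A} is positive semidefinite. -/
open Matrix BigOperators
open scoped ComplexOrder

namespace Compat

noncomputable section

variable {n : ℕ} (d : Fin n → ℕ)

/-- The index type of the full tensor product `H = H_1 ⊗ ⋯ ⊗ H_n`,
where `H_i = ℂ^{d i}`; operators on `H` are matrices indexed by `Idx d`. -/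
abbrev Idx : Type := ∀ i, Fin (d i)

/-- The index type of the tensor product of the factors `H_i` with `i ∈ A`. -/
abbrev SubIdx (A : Finset (Fin n)) : Type := ∀ i : A, Fin (d i.1)

/-- Combine an assignment on `B` and one on `Bᶜ` into a full assignment. -/
def glue (B : Finset (Fin n)) (x : SubIdx d B) (z : SubIdx d Bᶜ) : Idx d :=
  fun i => if h : i ∈ B then x ⟨i, h⟩ else z ⟨i, Finset.mem_compl.mpr h⟩

/-- Partial trace keeping the factors in `B` (i.e. tracing out the factors in `Bᶜ`). -/
def reduce (B : Finset (Fin n)) (M : Matrix (Idx d) (Idx d) ℂ) :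
    Matrix (SubIdx d B) (SubIdx d B) ℂ :=
  fun x y => ∑ z : SubIdx d Bᶜ, M (glue d B x z) (glue d B y z)

/-- Place an operator acting on the factors in `B`, tensored with the identity
on the remaining factors, as an operator on the full space `H`. -/
def embed (B : Finset (Fin n)) (W : Matrix (SubIdx d B) (SubIdx d B) ℂ) :
    Matrix (Idx d) (Idx d) ℂ :=
  fun x y =>
    if ∀ i ∈ Bᶜ, x i = y i then W (fun i => x i.1) (fun i => y i.1) else 0

/-- Index type for `H^(i) = ⊗_{j ≠ i} H_j`. -/
abbrev RedIdx (i : Fin n) := SubIdx d ({i}ᶜ)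

/-- The space `O` of `n`-tuples of operators, the `i`-th acting on `H^(i)`. -/
abbrev Tuple := ∀ i : Fin n, Matrix (RedIdx d i) (RedIdx d i) ℂ

/-- Membership in (the Hermitian tuples space) `O`: every component is Hermitian. -/
def IsHermTuple (W : Tuple d) : Prop := ∀ i, (W i).IsHermitian

/-- A density state: positive semidefinite with trace one. -/
def IsDensity {m : Type*} [Fintype m] (M : Matrix m m ℂ) : Prop :=
  M.PosSemidef ∧ M.trace = 1

/-- The set `C`: a tuple `σ` lies in `C` iff there is a density state `ρ` on the
full space whose one-system partial traces are the `σ i`. -/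
def MemC (σ : Tuple d) : Prop :=
  ∃ ρ : Matrix (Idx d) (Idx d) ℂ, IsDensity ρ ∧ ∀ i, σ i = reduce d ({i}ᶜ) ρ

/-- The inner product `⟨⟨A,B⟩⟩ = Σ_i Tr(A_i B_i)` on `O` (a real number, since the
traces are real for Hermitian tuples). -/
def cwip (A B : Tuple d) : ℝ := (∑ i, ((A i) * (B i)).trace).re

/-- A compatibility witness: an element of `O` pairing nonnegatively with all of `C`. -/
def IsWitness (W : Tuple d) : Prop :=
  IsHermTuple d W ∧ ∀ ρ, MemC d ρ → 0 ≤ cwip d W ρ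

/-- `p(W) = Σ_i W_i ⊗ 1_i`. -/
def pW (W : Tuple d) : Matrix (Idx d) (Idx d) ℂ :=
  ∑ i, embed d ({i}ᶜ) (W i)

/-- `Δ(Z) = Σ_{A ⊊ N} (−1)^{|A|} (Tr_{N∖A} Z) ⊗ 1_{N∖A}`. -/
def Δop (Z : Matrix (Idx d) (Idx d) ℂ) : Matrix (Idx d) (Idx d) ℂ :=
  ∑ A ∈ Finset.univ.filter (fun A : Finset (Fin n) => A ≠ Finset.univ),
    ((-1 : ℂ) ^ A.card) • embed d A (reduce d A Z)

/-- The tensor product `T_1 ⊗ ⋯ ⊗ T_n` of one-system operators. -/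
def tensorAll (T : ∀ i, Matrix (Fin (d i)) (Fin (d i)) ℂ) :
    Matrix (Idx d) (Idx d) ℂ :=
  fun x y => ∏ i, T i (x i) (y i)

/-- Partial trace from the factors in `B` down to the factors in `B'` (for `B' ⊆ B`). -/
def reduceSub (B B' : Finset (Fin n)) (M : Matrix (SubIdx d B) (SubIdx d B) ℂ) :
    Matrix (SubIdx d B') (SubIdx d B') ℂ :=
  fun x y => ∑ z : SubIdx d (B \ B'),
    M (fun i => if h : i.1 ∈ B' then x ⟨i.1, h⟩ else z ⟨i.1, Finset.mem_sdiff.mpr ⟨i.2, h⟩⟩)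
      (fun i => if h : i.1 ∈ B' then y ⟨i.1, h⟩ else z ⟨i.1, Finset.mem_sdiff.mpr ⟨i.2, h⟩⟩)

/-- A tuple of subsystem states has consistent overlapping partial traces if
tracing the `j`-factor out of `σ_i` agrees with tracing the `i`-factor out of `σ_j`. -/
def HasConsistentTraces (σ : Tuple d) : Prop :=
  ∀ i j : Fin n, i ≠ j →
    reduceSub d ({i}ᶜ) ({i}ᶜ ∩ {j}ᶜ) (σ i) = reduceSub d ({j}ᶜ) ({i}ᶜ ∩ {j}ᶜ) (σ j)

/-- The tuple `I` of reduced states of the maximally mixed state `1_H / D`. -/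
def Itup : Tuple d :=
  fun i => ((d i : ℂ) / (∏ k, (d k : ℂ))) • (1 : Matrix (RedIdx d i) (RedIdx d i) ℂ)

/-- A positive tuple: all components positive semidefinite. -/
def PosTuple (σ : Tuple d) : Prop := ∀ i, (σ i).PosSemidef

/-- A normalized witness: `⟨⟨W, I⟩⟩ = 1` (equivalently `Tr p(W) = 1`). -/
def Normalized (W : Tuple d) : Prop := cwip d W (Itup d) = 1

/-- `W'` is finer than `W`. -/
def Finer (W' W : Tuple d) : Prop :=
  ∀ σ, PosTuple d σ → cwip d W σ < 0 → cwip d W' σ < 0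

/-- `λ(W, W') = inf_{σ ∈ D_W} |⟨⟨W',σ⟩⟩| / |⟨⟨W,σ⟩⟩|`. -/
def lam (W W' : Tuple d) : ℝ :=
  sInf {t | ∃ σ, PosTuple d σ ∧ cwip d W σ < 0 ∧ t = |cwip d W' σ| / |cwip d W σ|}

end
end Compat

open Matrix BigOperators
open scoped ComplexOrder

namespace DeltaProof
open Compat Finset
noncomputable section
variable {n : ℕ} (d : Fin n → ℕ)

lemma glue_mem {A : Finset (Fin n)} (a : SubIdx d A) (z : SubIdx d Aᶜ) {i : Fin n} (h : i ∈ A) :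
    glue d A a z i = a ⟨i, h⟩ := dif_pos h

lemma glue_not_mem {A : Finset (Fin n)} (a : SubIdx d A) (z : SubIdx d Aᶜ) {i : Fin n} (h : i ∉ A) :
    glue d A a z i = z ⟨i, Finset.mem_compl.mpr h⟩ := dif_neg h

lemma glue_restrict {A : Finset (Fin n)} (a : SubIdx d A) (z : SubIdx d Aᶜ) :
    (fun i : A => glue d A a z i.1) = a := funext fun i => glue_mem d a z i.2

lemma glue_restrict_compl {A : Finset (Fin n)} (a : SubIdx d A) (z : SubIdx d Aᶜ) :
    (fun i : (Aᶜ : Finset (Fin n)) => glue d A a z i.1) = z := by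
  funext i
  have h : i.1 ∉ A := Finset.mem_compl.mp i.2
  rw [glue_not_mem d a z h]

/-- Summing over the full index set via glue. -/
lemma sum_idx {M : Type*} [AddCommMonoid M] (A : Finset (Fin n)) (g : Idx d → M) :
    ∑ x : Idx d, g x = ∑ a : SubIdx d A, ∑ z : SubIdx d Aᶜ, g (glue d A a z) := by
  have : ∑ a : SubIdx d A, ∑ z : SubIdx d Aᶜ, g (glue d A a z)
      = ∑ w : SubIdx d A × SubIdx d Aᶜ, g (glue d A w.1 w.2) := (Fintype.sum_prod_type' _).symm
  rw [this]
  symm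
  apply Fintype.sum_bijective (fun az : SubIdx d A × SubIdx d Aᶜ => glue d A az.1 az.2)
  · constructor
    · intro w w' h
      simp only at h
      ext i
      · have := congrFun h i.1
        simp only [glue, dif_pos i.2] at this
        exact congrArg Fin.val this
      · have hi : i.1 ∉ A := Finset.mem_compl.mp i.2
        have := congrFun h i.1
        simp only [glue, dif_neg hi] at this
        exact congrArg Fin.val this
    · intro x
      refine ⟨(fun i => x i.1, fun i => x i.1), ?_⟩
      funext i
      simp only [glue]
      by_cases h : i ∈ A
      · rw [dif_pos h]
      · rw [dif_neg h]
  · intro az; rfl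

def kk {m : ℕ} (u v a b : Fin m) : ℂ :=
  (if a = u then 1 else 0) * (if b = v then 1 else 0)
    - (if a = v then 1 else 0) * (if b = u then 1 else 0)

lemma kk_star {m : ℕ} (u v a b : Fin m) : star (kk u v a b) = kk u v a b := by
  simp only [kk, star_sub, star_mul', apply_ite (star : ℂ → ℂ), star_one, star_zero]
  try ring

lemma key1 {m : ℕ} (a b c e : Fin m) :
    ∑ u : Fin m, ∑ v : Fin m, kk u v a b * kk u v c e
      = 2 * ((if a = c then 1 else 0) * (if b = e then 1 else 0)
          - (if a = e then 1 else 0) * (if b = c then 1 else 0)) := by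
  simp only [kk, sub_mul, mul_sub, ite_mul, one_mul, zero_mul, mul_ite, mul_one, mul_zero,
    Finset.sum_sub_distrib, Finset.sum_ite_eq, Finset.sum_ite_eq', Finset.mem_univ, if_true]
  split_ifs <;> (try simp_all) <;> (try ring)

def Efac (i : Fin n) (p q r s : Idx d) : ℂ :=
  (if p i = q i then 1 else 0) * (if s i = r i then 1 else 0)
    - (if p i = r i then 1 else 0) * (if s i = q i then 1 else 0)

def core (ρ : Matrix (Idx d) (Idx d) ℂ) (v : Idx d → ℂ) : ℂ :=
  ∑ p : Idx d, ∑ q : Idx d, ∑ r : Idx d, ∑ s : Idx d,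
    star (v p) * v q * ρ r s * ∏ i, Efac d i p q r s

lemma sum_pi {β : Fin n → Type*} [∀ i, Fintype (β i)] [∀ i, DecidableEq (β i)]
    (g : ∀ i, β i → ℂ) :
    ∑ U : (∀ i, β i), ∏ i, g i (U i) = ∏ i, ∑ u, g i u := by
  rw [Finset.prod_univ_sum (fun _ => Finset.univ) g, Fintype.piFinset_univ]

lemma pairsum (p q r s : Idx d) :
    ∑ U : Idx d, ∑ V : Idx d,
        ∏ i, (kk (U i) (V i) (p i) (s i) * kk (U i) (V i) (q i) (r i))
      = 2 ^ n * ∏ i, Efac d i p q r s := by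
  have h1 : ∀ U : Idx d, ∑ V : Idx d,
      ∏ i, (kk (U i) (V i) (p i) (s i) * kk (U i) (V i) (q i) (r i))
      = ∏ i, ∑ v, (kk (U i) v (p i) (s i) * kk (U i) v (q i) (r i)) :=
    fun U => sum_pi (fun i v => kk (U i) v (p i) (s i) * kk (U i) v (q i) (r i))
  rw [Finset.sum_congr rfl fun U _ => h1 U]
  rw [sum_pi (fun i u => ∑ v, kk u v (p i) (s i) * kk u v (q i) (r i))]
  have h2 : ∀ i, (∑ u, ∑ v, kk u v (p i) (s i) * kk u v (q i) (r i)) = 2 * Efac d i p q r s :=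
    fun i => key1 (p i) (s i) (q i) (r i)
  rw [Finset.prod_congr rfl fun i _ => h2 i, Finset.prod_mul_distrib, Finset.prod_const,
    Finset.card_univ, Fintype.card_fin]

lemma sum4_swap {α β γ δ : Type*} [Fintype α] [Fintype β] [Fintype γ] [Fintype δ]
    (f : α → β → γ → δ → ℂ) :
    ∑ r : γ, ∑ s : δ, ∑ p : α, ∑ q : β, f p q r s
      = ∑ p : α, ∑ q : β, ∑ r : γ, ∑ s : δ, f p q r s := by
  calc ∑ r : γ, ∑ s : δ, ∑ p : α, ∑ q : β, f p q r s
      = ∑ r : γ, ∑ p : α, ∑ s : δ, ∑ q : β, f p q r s :=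
        Finset.sum_congr rfl fun r _ => Finset.sum_comm
    _ = ∑ p : α, ∑ r : γ, ∑ s : δ, ∑ q : β, f p q r s := Finset.sum_comm
    _ = ∑ p : α, ∑ r : γ, ∑ q : β, ∑ s : δ, f p q r s :=
        Finset.sum_congr rfl fun p _ => Finset.sum_congr rfl fun r _ => Finset.sum_comm
    _ = ∑ p : α, ∑ q : β, ∑ r : γ, ∑ s : δ, f p q r s :=
        Finset.sum_congr rfl fun p _ => Finset.sum_comm

lemma quad (M : Matrix (Idx d) (Idx d) ℂ) (v : Idx d → ℂ) :
    star v ⬝ᵥ M.mulVec v = ∑ x, ∑ y, star (v x) * (M x y * v y) := by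
  simp [dotProduct, mulVec, Finset.mul_sum]

def fvec (v : Idx d → ℂ) (U V : Idx d) : Idx d → ℂ :=
  fun s => ∑ p, star (v p) * ∏ i, kk (U i) (V i) (p i) (s i)

lemma star_fvec (v : Idx d → ℂ) (U V : Idx d) (r : Idx d) :
    star (fvec d v U V r) = ∑ q, v q * ∏ i, kk (U i) (V i) (q i) (r i) := by
  rw [fvec, star_sum]
  refine Finset.sum_congr rfl fun q _ => ?_
  rw [star_mul', star_star, star_prod]
  simp only [kk_star]

lemma lemB (ρ : Matrix (Idx d) (Idx d) ℂ) (v : Idx d → ℂ) :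
    ∑ w : Idx d × Idx d, star (fvec d v w.1 w.2) ⬝ᵥ ρ.mulVec (fvec d v w.1 w.2)
      = 2 ^ n * core d ρ v := by
  have h1 : ∀ U V : Idx d, star (fvec d v U V) ⬝ᵥ ρ.mulVec (fvec d v U V)
      = ∑ r, ∑ s, ∑ p, ∑ q, star (v p) * v q * ρ r s
          * ∏ i, (kk (U i) (V i) (p i) (s i) * kk (U i) (V i) (q i) (r i)) := by
    intro U V
    rw [quad]
    calc ∑ x, ∑ y, star (fvec d v U V x) * (ρ x y * fvec d v U V y)
        = ∑ r, ∑ s, (∑ q, v q * ∏ i, kk (U i) (V i) (q i) (r i))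
            * (ρ r s * ∑ p, star (v p) * ∏ i, kk (U i) (V i) (p i) (s i)) := by
          refine Finset.sum_congr rfl fun r _ => Finset.sum_congr rfl fun s _ => ?_
          rw [star_fvec]
          rfl
      _ = _ := by
          simp only [Finset.sum_mul, Finset.mul_sum]
          refine Finset.sum_congr rfl fun r _ => Finset.sum_congr rfl fun s _ =>
            Finset.sum_congr rfl fun p _ => Finset.sum_congr rfl fun q _ => ?_
          rw [Finset.prod_mul_distrib]
          ring
  calc ∑ w : Idx d × Idx d, star (fvec d v w.1 w.2) ⬝ᵥ ρ.mulVec (fvec d v w.1 w.2)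
      = ∑ w : Idx d × Idx d, ∑ r, ∑ s, ∑ p, ∑ q, star (v p) * v q * ρ r s
          * ∏ i, (kk (w.1 i) (w.2 i) (p i) (s i) * kk (w.1 i) (w.2 i) (q i) (r i)) :=
        Finset.sum_congr rfl fun w _ => h1 w.1 w.2
    _ = ∑ r, ∑ s, ∑ p, ∑ q, ∑ w : Idx d × Idx d, star (v p) * v q * ρ r s
          * ∏ i, (kk (w.1 i) (w.2 i) (p i) (s i) * kk (w.1 i) (w.2 i) (q i) (r i)) := by
        rw [Finset.sum_comm]
        refine Finset.sum_congr rfl fun r _ => ?_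
        rw [Finset.sum_comm]
        refine Finset.sum_congr rfl fun s _ => ?_
        rw [Finset.sum_comm]
        refine Finset.sum_congr rfl fun p _ => ?_
        rw [Finset.sum_comm]
    _ = ∑ r, ∑ s, ∑ p, ∑ q, 2 ^ n * (star (v p) * v q * ρ r s * ∏ i, Efac d i p q r s) := by
        refine Finset.sum_congr rfl fun r _ => Finset.sum_congr rfl fun s _ =>
          Finset.sum_congr rfl fun p _ => Finset.sum_congr rfl fun q _ => ?_
        rw [← Finset.mul_sum,
          Fintype.sum_prod_type' (f := fun (U V : Idx d) =>
            ∏ i, kk (U i) (V i) (p i) (s i) * kk (U i) (V i) (q i) (r i)),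
          pairsum d p q r s]
        ring
    _ = 2 ^ n * core d ρ v := by
        rw [core, Finset.mul_sum]
        simp only [Finset.mul_sum]
        exact sum4_swap (fun p q r s => 2 ^ n * (star (v p) * v q * ρ r s * ∏ i, Efac d i p q r s))
end
end DeltaProof

namespace DeltaProofA
open Compat Finset DeltaProof

noncomputable section
variable {n : ℕ} (d : Fin n → ℕ)

lemma sum_boole_mul' {α : Type*} [Fintype α] [DecidableEq α] (a : α) (F : α → ℂ) :
    ∑ x : α, (if x = a then 1 else 0) * F x = F a := by
  simp only [boole_mul, Finset.sum_ite_eq', Finset.mem_univ, if_true]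

lemma sum_boole_mul {α : Type*} [Fintype α] [DecidableEq α] (a : α) (F : α → ℂ) :
    ∑ x : α, (if a = x then 1 else 0) * F x = F a := by
  simp only [boole_mul, Finset.sum_ite_eq, Finset.mem_univ, if_true]

lemma boole_congr {P Q : Prop} [Decidable P] [Decidable Q] (h : P ↔ Q) :
    (if P then (1:ℂ) else 0) = if Q then 1 else 0 := by
  rw [if_congr h rfl rfl]

lemma forall_mem_glue_right {A : Finset (Fin n)} (x : Idx d) (a : SubIdx d A) (z : SubIdx d Aᶜ) :
    (∀ i ∈ A, x i = glue d A a z i) ↔ (fun i : A => x i.1) = a := by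
  constructor
  · intro h; funext i
    have := h i.1 i.2
    rwa [glue_mem d a z i.2] at this
  · intro h i hi
    rw [glue_mem d a z hi, ← h]

lemma forall_mem_glue_left {A : Finset (Fin n)} (a : SubIdx d A) (z : SubIdx d Aᶜ) (x : Idx d) :
    (∀ i ∈ A, glue d A a z i = x i) ↔ a = (fun i : A => x i.1) := by
  constructor
  · intro h; funext i
    have := h i.1 i.2
    rw [glue_mem d a z i.2] at this
    exact this.symm ▸ rfl
  · intro h i hi
    rw [glue_mem d a z hi, h]

lemma forall_compl_glue_glue {A : Finset (Fin n)} (a b : SubIdx d A) (z z' : SubIdx d Aᶜ) :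
    (∀ i ∈ Aᶜ, glue d A b z' i = glue d A a z i) ↔ z' = z := by
  constructor
  · intro h; funext i
    have hi : i.1 ∉ A := Finset.mem_compl.mp i.2
    have := h i.1 i.2
    rwa [glue_not_mem d b z' hi, glue_not_mem d a z hi] at this
  · intro h i hi
    have hA : i ∉ A := Finset.mem_compl.mp hi
    rw [glue_not_mem d b z' hA, glue_not_mem d a z hA, h]

def CA (A : Finset (Fin n)) (ρ : Matrix (Idx d) (Idx d) ℂ) (v : Idx d → ℂ) : ℂ :=
  ∑ a : SubIdx d A, ∑ c : SubIdx d Aᶜ, ∑ b : SubIdx d A,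
    star (v (glue d A a c)) * v (glue d A b c)
      * ∑ z : SubIdx d Aᶜ, ρ (glue d A a z) (glue d A b z)

def TA (A : Finset (Fin n)) (ρ : Matrix (Idx d) (Idx d) ℂ) (v : Idx d → ℂ) : ℂ :=
  ∑ p : Idx d, ∑ q : Idx d, ∑ r : Idx d, ∑ s : Idx d,
    star (v p) * v q * ρ r s *
      ((if ∀ i ∈ A, p i = r i then (1:ℂ) else 0) * (if ∀ i ∈ A, s i = q i then (1:ℂ) else 0) *
       ((if ∀ i ∈ Aᶜ, p i = q i then (1:ℂ) else 0) * (if ∀ i ∈ Aᶜ, s i = r i then (1:ℂ) else 0)))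

def Sfull (ρ : Matrix (Idx d) (Idx d) ℂ) : Matrix (Idx d) (Idx d) ℂ :=
  ∑ A : Finset (Fin n), ((-1 : ℂ) ^ A.card) • Compat.embed d A (Compat.reduce d A ρ)

lemma embed_glue (A : Finset (Fin n)) (ρ : Matrix (Idx d) (Idx d) ℂ)
    (a b : SubIdx d A) (c c' : SubIdx d Aᶜ) :
    Compat.embed d A (Compat.reduce d A ρ) (glue d A a c) (glue d A b c')
      = if c = c' then ∑ z : SubIdx d Aᶜ, ρ (glue d A a z) (glue d A b z) else 0 := by
  show (if ∀ i ∈ Aᶜ, glue d A a c i = glue d A b c' i then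
      Compat.reduce d A ρ (fun i => glue d A a c i.1) (fun i => glue d A b c' i.1) else 0) = _
  rw [if_congr (forall_compl_glue_glue d b a c' c) (by rw [glue_restrict d a c, glue_restrict d b c']) rfl]
  rfl

lemma embed_side (A : Finset (Fin n)) (ρ : Matrix (Idx d) (Idx d) ℂ) (v : Idx d → ℂ) :
    (∑ x : Idx d, ∑ y : Idx d,
      star (v x) * (Compat.embed d A (Compat.reduce d A ρ) x y * v y)) = CA d A ρ v := by
  rw [sum_idx d A (fun x => ∑ y : Idx d,
    star (v x) * (Compat.embed d A (Compat.reduce d A ρ) x y * v y))]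
  refine Finset.sum_congr rfl fun a _ => Finset.sum_congr rfl fun c _ => ?_
  rw [sum_idx d A (fun y => star (v (glue d A a c))
    * (Compat.embed d A (Compat.reduce d A ρ) (glue d A a c) y * v y))]
  refine Finset.sum_congr rfl fun b _ => ?_
  calc ∑ c' : SubIdx d Aᶜ, star (v (glue d A a c))
        * (Compat.embed d A (Compat.reduce d A ρ) (glue d A a c) (glue d A b c') * v (glue d A b c'))
      = ∑ c' : SubIdx d Aᶜ, (if c = c' then (1:ℂ) else 0) *
          (star (v (glue d A a c)) * v (glue d A b c')
            * ∑ z : SubIdx d Aᶜ, ρ (glue d A a z) (glue d A b z)) := by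
        refine Finset.sum_congr rfl fun c' _ => ?_
        rw [embed_glue d A ρ a b c c']
        by_cases h : c = c'
        · simp only [h, if_pos]
          ring
        · simp only [h, if_false, if_neg h, mul_zero, zero_mul]
    _ = star (v (glue d A a c)) * v (glue d A b c)
          * ∑ z : SubIdx d Aᶜ, ρ (glue d A a z) (glue d A b z) :=
        sum_boole_mul c _

lemma hin (A : Finset (Fin n)) (ρ : Matrix (Idx d) (Idx d) ℂ) (p q : Idx d) :
    ∑ r : Idx d, ∑ s : Idx d, ρ r s *
        ((if ∀ i ∈ A, p i = r i then (1:ℂ) else 0) * (if ∀ i ∈ A, s i = q i then (1:ℂ) else 0)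
          * (if ∀ i ∈ Aᶜ, s i = r i then (1:ℂ) else 0))
      = ∑ z : SubIdx d Aᶜ, ρ (glue d A (fun i => p i.1) z) (glue d A (fun i => q i.1) z) := by
  have step1 : ∀ (a' : SubIdx d A) (z : SubIdx d Aᶜ),
      (∑ s : Idx d, ρ (glue d A a' z) s *
        ((if ∀ i ∈ A, p i = glue d A a' z i then (1:ℂ) else 0)
          * (if ∀ i ∈ A, s i = q i then (1:ℂ) else 0)
          * (if ∀ i ∈ Aᶜ, s i = glue d A a' z i then (1:ℂ) else 0)))
      = (if (fun i : A => p i.1) = a' then (1:ℂ) else 0)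
          * ρ (glue d A a' z) (glue d A (fun i : A => q i.1) z) := by
    intro a' z
    rw [sum_idx d A (fun s => ρ (glue d A a' z) s *
        ((if ∀ i ∈ A, p i = glue d A a' z i then (1:ℂ) else 0)
          * (if ∀ i ∈ A, s i = q i then (1:ℂ) else 0)
          * (if ∀ i ∈ Aᶜ, s i = glue d A a' z i then (1:ℂ) else 0)))]
    have inner : ∀ b' : SubIdx d A,
        (∑ z' : SubIdx d Aᶜ, ρ (glue d A a' z) (glue d A b' z') *
          ((if ∀ i ∈ A, p i = glue d A a' z i then (1:ℂ) else 0)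
            * (if ∀ i ∈ A, glue d A b' z' i = q i then (1:ℂ) else 0)
            * (if ∀ i ∈ Aᶜ, glue d A b' z' i = glue d A a' z i then (1:ℂ) else 0)))
        = (if b' = (fun i : A => q i.1) then (1:ℂ) else 0) *
            ((if (fun i : A => p i.1) = a' then (1:ℂ) else 0)
              * ρ (glue d A a' z) (glue d A b' z)) := by
      intro b'
      calc ∑ z' : SubIdx d Aᶜ, ρ (glue d A a' z) (glue d A b' z') *
            ((if ∀ i ∈ A, p i = glue d A a' z i then (1:ℂ) else 0)
              * (if ∀ i ∈ A, glue d A b' z' i = q i then (1:ℂ) else 0)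
              * (if ∀ i ∈ Aᶜ, glue d A b' z' i = glue d A a' z i then (1:ℂ) else 0))
          = ∑ z' : SubIdx d Aᶜ, (if z' = z then (1:ℂ) else 0) *
              ((if b' = (fun i : A => q i.1) then (1:ℂ) else 0) *
                ((if (fun i : A => p i.1) = a' then (1:ℂ) else 0)
                  * ρ (glue d A a' z) (glue d A b' z'))) := by
            refine Finset.sum_congr rfl fun z' _ => ?_
            rw [boole_congr (forall_mem_glue_right d p a' z),
              boole_congr (forall_mem_glue_left d b' z' q),
              boole_congr (forall_compl_glue_glue d a' b' z z')]
            ring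
        _ = (if b' = (fun i : A => q i.1) then (1:ℂ) else 0) *
              ((if (fun i : A => p i.1) = a' then (1:ℂ) else 0)
                * ρ (glue d A a' z) (glue d A b' z)) :=
            sum_boole_mul' z _
    rw [Finset.sum_congr rfl fun b' _ => inner b']
    rw [sum_boole_mul' (fun i : A => q i.1) (fun b' =>
      (if (fun i : A => p i.1) = a' then (1:ℂ) else 0)
        * ρ (glue d A a' z) (glue d A b' z))]
  rw [sum_idx d A (fun r => ∑ s : Idx d, ρ r s *
      ((if ∀ i ∈ A, p i = r i then (1:ℂ) else 0) * (if ∀ i ∈ A, s i = q i then (1:ℂ) else 0)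
        * (if ∀ i ∈ Aᶜ, s i = r i then (1:ℂ) else 0)))]
  rw [Finset.sum_congr rfl fun a' _ => Finset.sum_congr rfl fun z _ => step1 a' z]
  rw [Finset.sum_congr rfl fun a' _ => (Finset.mul_sum Finset.univ
    (fun z => ρ (glue d A a' z) (glue d A (fun i : A => q i.1) z))
    (if (fun i : A => p i.1) = a' then (1:ℂ) else 0)).symm]
  rw [sum_boole_mul (fun i : A => p i.1) (fun a' =>
    ∑ z : SubIdx d Aᶜ, ρ (glue d A a' z) (glue d A (fun i : A => q i.1) z))]

lemma TA_eq_CA (A : Finset (Fin n)) (ρ : Matrix (Idx d) (Idx d) ℂ) (v : Idx d → ℂ) :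
    TA d A ρ v = CA d A ρ v := by
  rw [TA]
  calc ∑ p : Idx d, ∑ q : Idx d, ∑ r : Idx d, ∑ s : Idx d,
        star (v p) * v q * ρ r s *
          ((if ∀ i ∈ A, p i = r i then (1:ℂ) else 0) * (if ∀ i ∈ A, s i = q i then (1:ℂ) else 0) *
           ((if ∀ i ∈ Aᶜ, p i = q i then (1:ℂ) else 0) * (if ∀ i ∈ Aᶜ, s i = r i then (1:ℂ) else 0)))
      = ∑ p : Idx d, ∑ q : Idx d,
          (star (v p) * v q * (if ∀ i ∈ Aᶜ, p i = q i then (1:ℂ) else 0)) *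
            ∑ r : Idx d, ∑ s : Idx d, ρ r s *
              ((if ∀ i ∈ A, p i = r i then (1:ℂ) else 0) * (if ∀ i ∈ A, s i = q i then (1:ℂ) else 0)
                * (if ∀ i ∈ Aᶜ, s i = r i then (1:ℂ) else 0)) := by
        refine Finset.sum_congr rfl fun p _ => Finset.sum_congr rfl fun q _ => ?_
        rw [Finset.mul_sum]
        refine Finset.sum_congr rfl fun r _ => ?_
        rw [Finset.mul_sum]
        refine Finset.sum_congr rfl fun s _ => ?_
        ring
    _ = ∑ p : Idx d, ∑ q : Idx d,
          (star (v p) * v q * (if ∀ i ∈ Aᶜ, p i = q i then (1:ℂ) else 0)) *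
            ∑ z : SubIdx d Aᶜ, ρ (glue d A (fun i : A => p i.1) z) (glue d A (fun i : A => q i.1) z) := by
        refine Finset.sum_congr rfl fun p _ => Finset.sum_congr rfl fun q _ => ?_
        rw [hin d A ρ p q]
    _ = CA d A ρ v := by
        rw [sum_idx d A (fun p => ∑ q : Idx d,
          (star (v p) * v q * (if ∀ i ∈ Aᶜ, p i = q i then (1:ℂ) else 0)) *
            ∑ z : SubIdx d Aᶜ, ρ (glue d A (fun i : A => p i.1) z) (glue d A (fun i : A => q i.1) z))]
        refine Finset.sum_congr rfl fun a _ => Finset.sum_congr rfl fun c _ => ?_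
        rw [sum_idx d A (fun q =>
          (star (v (glue d A a c)) * v q * (if ∀ i ∈ Aᶜ, glue d A a c i = q i then (1:ℂ) else 0)) *
            ∑ z : SubIdx d Aᶜ, ρ (glue d A (fun i : A => glue d A a c i.1) z) (glue d A (fun i : A => q i.1) z))]
        refine Finset.sum_congr rfl fun b _ => ?_
        calc ∑ c' : SubIdx d Aᶜ,
              (star (v (glue d A a c)) * v (glue d A b c')
                * (if ∀ i ∈ Aᶜ, glue d A a c i = glue d A b c' i then (1:ℂ) else 0)) *
                ∑ z : SubIdx d Aᶜ, ρ (glue d A (fun i : A => glue d A a c i.1) z)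
                  (glue d A (fun i : A => glue d A b c' i.1) z)
            = ∑ c' : SubIdx d Aᶜ, (if c = c' then (1:ℂ) else 0) *
                (star (v (glue d A a c)) * v (glue d A b c')
                  * ∑ z : SubIdx d Aᶜ, ρ (glue d A a z) (glue d A b z)) := by
              refine Finset.sum_congr rfl fun c' _ => ?_
              rw [glue_restrict d a c, glue_restrict d b c',
                boole_congr (forall_compl_glue_glue d b a c' c)]
              ring
          _ = star (v (glue d A a c)) * v (glue d A b c)
                * ∑ z : SubIdx d Aᶜ, ρ (glue d A a z) (glue d A b z) := sum_boole_mul c _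

lemma sum_out4 {ε α β γ δ' : Type*} [Fintype ε] [Fintype α] [Fintype β] [Fintype γ] [Fintype δ']
    (f : ε → α → β → γ → δ' → ℂ) :
    ∑ p : α, ∑ q : β, ∑ r : γ, ∑ s : δ', ∑ A : ε, f A p q r s
      = ∑ A : ε, ∑ p : α, ∑ q : β, ∑ r : γ, ∑ s : δ', f A p q r s := by
  calc ∑ p : α, ∑ q : β, ∑ r : γ, ∑ s : δ', ∑ A : ε, f A p q r s
      = ∑ p : α, ∑ q : β, ∑ r : γ, ∑ A : ε, ∑ s : δ', f A p q r s :=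
        Finset.sum_congr rfl fun p _ => Finset.sum_congr rfl fun q _ =>
          Finset.sum_congr rfl fun r _ => Finset.sum_comm
    _ = ∑ p : α, ∑ q : β, ∑ A : ε, ∑ r : γ, ∑ s : δ', f A p q r s :=
        Finset.sum_congr rfl fun p _ => Finset.sum_congr rfl fun q _ => Finset.sum_comm
    _ = ∑ p : α, ∑ A : ε, ∑ q : β, ∑ r : γ, ∑ s : δ', f A p q r s :=
        Finset.sum_congr rfl fun p _ => Finset.sum_comm
    _ = ∑ A : ε, ∑ p : α, ∑ q : β, ∑ r : γ, ∑ s : δ', f A p q r s := Finset.sum_comm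

lemma hprod (p q r s : Idx d) :
    ∏ i, Efac d i p q r s
      = ∑ A : Finset (Fin n), (-1:ℂ)^A.card *
          ((if ∀ i ∈ A, p i = r i then (1:ℂ) else 0) * (if ∀ i ∈ A, s i = q i then (1:ℂ) else 0) *
           ((if ∀ i ∈ Aᶜ, p i = q i then (1:ℂ) else 0) * (if ∀ i ∈ Aᶜ, s i = r i then (1:ℂ) else 0))) := by
  have h1 : ∀ i : Fin n, Efac d i p q r s
      = (-((if p i = r i then (1:ℂ) else 0) * (if s i = q i then (1:ℂ) else 0)))
        + ((if p i = q i then (1:ℂ) else 0) * (if s i = r i then (1:ℂ) else 0)) := by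
    intro i
    rw [Efac]
    ring
  rw [Finset.prod_congr rfl fun i _ => h1 i, Finset.prod_add, Finset.powerset_univ]
  refine Finset.sum_congr rfl fun A _ => ?_
  rw [← Finset.compl_eq_univ_sdiff]
  have e1 : ∏ i ∈ A, (-((if p i = r i then (1:ℂ) else 0) * (if s i = q i then (1:ℂ) else 0)))
      = (-1:ℂ)^A.card * ((if ∀ i ∈ A, p i = r i then (1:ℂ) else 0)
          * (if ∀ i ∈ A, s i = q i then (1:ℂ) else 0)) := by
    rw [Finset.prod_congr rfl fun i (_ : i ∈ A) => neg_eq_neg_one_mul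
        ((if p i = r i then (1:ℂ) else 0) * (if s i = q i then (1:ℂ) else 0)),
      Finset.prod_mul_distrib, Finset.prod_const, Finset.prod_mul_distrib,
      Finset.prod_boole, Finset.prod_boole]
    congr!
  have e2 : ∏ i ∈ Aᶜ, ((if p i = q i then (1:ℂ) else 0) * (if s i = r i then (1:ℂ) else 0))
      = (if ∀ i ∈ Aᶜ, p i = q i then (1:ℂ) else 0) * (if ∀ i ∈ Aᶜ, s i = r i then (1:ℂ) else 0) := by
    rw [Finset.prod_mul_distrib, Finset.prod_boole, Finset.prod_boole]
    congr!
  rw [e1, e2]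
  ring

lemma core_eq (ρ : Matrix (Idx d) (Idx d) ℂ) (v : Idx d → ℂ) :
    core d ρ v = ∑ A : Finset (Fin n), (-1:ℂ)^A.card * TA d A ρ v := by
  rw [core]
  calc ∑ p : Idx d, ∑ q : Idx d, ∑ r : Idx d, ∑ s : Idx d,
        star (v p) * v q * ρ r s * ∏ i, Efac d i p q r s
      = ∑ p : Idx d, ∑ q : Idx d, ∑ r : Idx d, ∑ s : Idx d, ∑ A : Finset (Fin n),
          (-1:ℂ)^A.card * (star (v p) * v q * ρ r s *
            ((if ∀ i ∈ A, p i = r i then (1:ℂ) else 0) * (if ∀ i ∈ A, s i = q i then (1:ℂ) else 0) *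
             ((if ∀ i ∈ Aᶜ, p i = q i then (1:ℂ) else 0)
              * (if ∀ i ∈ Aᶜ, s i = r i then (1:ℂ) else 0)))) := by
        refine Finset.sum_congr rfl fun p _ => Finset.sum_congr rfl fun q _ =>
          Finset.sum_congr rfl fun r _ => Finset.sum_congr rfl fun s _ => ?_
        rw [hprod d p q r s, Finset.mul_sum]
        refine Finset.sum_congr rfl fun A _ => ?_
        ring
    _ = ∑ A : Finset (Fin n), ∑ p : Idx d, ∑ q : Idx d, ∑ r : Idx d, ∑ s : Idx d,
          (-1:ℂ)^A.card * (star (v p) * v q * ρ r s *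
            ((if ∀ i ∈ A, p i = r i then (1:ℂ) else 0) * (if ∀ i ∈ A, s i = q i then (1:ℂ) else 0) *
             ((if ∀ i ∈ Aᶜ, p i = q i then (1:ℂ) else 0)
              * (if ∀ i ∈ Aᶜ, s i = r i then (1:ℂ) else 0)))) := sum_out4 _
    _ = ∑ A : Finset (Fin n), (-1:ℂ)^A.card * TA d A ρ v := by
        refine Finset.sum_congr rfl fun A _ => ?_
        rw [TA]
        simp only [← Finset.mul_sum]

lemma lemA (ρ : Matrix (Idx d) (Idx d) ℂ) (v : Idx d → ℂ) :
    star v ⬝ᵥ (Sfull d ρ).mulVec v = core d ρ v := by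
  rw [quad]
  calc ∑ x : Idx d, ∑ y : Idx d, star (v x) * (Sfull d ρ x y * v y)
      = ∑ x : Idx d, ∑ y : Idx d, ∑ A : Finset (Fin n),
          (-1:ℂ)^A.card * (star (v x) * (Compat.embed d A (Compat.reduce d A ρ) x y * v y)) := by
        refine Finset.sum_congr rfl fun x _ => Finset.sum_congr rfl fun y _ => ?_
        rw [Sfull, Matrix.sum_apply, Finset.sum_mul, Finset.mul_sum]
        refine Finset.sum_congr rfl fun A _ => ?_
        rw [Matrix.smul_apply, smul_eq_mul]
        ring
    _ = ∑ A : Finset (Fin n), ∑ x : Idx d, ∑ y : Idx d,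
          (-1:ℂ)^A.card * (star (v x) * (Compat.embed d A (Compat.reduce d A ρ) x y * v y)) :=
        (Finset.sum_congr rfl fun x _ => Finset.sum_comm).trans Finset.sum_comm
    _ = ∑ A : Finset (Fin n), (-1:ℂ)^A.card * ∑ x : Idx d, ∑ y : Idx d,
          star (v x) * (Compat.embed d A (Compat.reduce d A ρ) x y * v y) := by
        refine Finset.sum_congr rfl fun A _ => ?_
        simp only [← Finset.mul_sum]
    _ = ∑ A : Finset (Fin n), (-1:ℂ)^A.card * CA d A ρ v := by
        refine Finset.sum_congr rfl fun A _ => ?_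
        rw [embed_side d A ρ v]
    _ = core d ρ v := by
        rw [core_eq d ρ v]
        refine Finset.sum_congr rfl fun A _ => ?_
        rw [TA_eq_CA d A ρ v]

lemma embed_univ (ρ : Matrix (Idx d) (Idx d) ℂ) :
    Compat.embed d Finset.univ (Compat.reduce d Finset.univ ρ) = ρ := by
  ext x y
  show (if ∀ i ∈ (Finset.univ : Finset (Fin n))ᶜ, x i = y i then
      Compat.reduce d Finset.univ ρ (fun i => x i.1) (fun i => y i.1) else 0) = ρ x y
  rw [if_pos (by intro i hi; simp at hi)]
  have hE : IsEmpty {i : Fin n // i ∈ (Finset.univ : Finset (Fin n))ᶜ} :=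
    ⟨fun i => by have := i.2; simp at this⟩
  haveI := hE
  have hg : ∀ (w : Idx d) (z : SubIdx d (Finset.univ : Finset (Fin n))ᶜ),
      glue d Finset.univ (fun i => w i.1) z = w := by
    intro w z; funext i; rw [glue_mem d _ _ (Finset.mem_univ i)]
  show ∑ z : SubIdx d (Finset.univ : Finset (Fin n))ᶜ,
      ρ (glue d Finset.univ (fun i => x i.1) z) (glue d Finset.univ (fun i => y i.1) z) = ρ x y
  rw [Fintype.sum_unique]
  rw [hg, hg]

lemma embed_reduce_herm (A : Finset (Fin n)) (ρ : Matrix (Idx d) (Idx d) ℂ)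
    (hρ : ρ.IsHermitian) : (Compat.embed d A (Compat.reduce d A ρ)).IsHermitian := by
  have hap : ∀ a b, star (ρ a b) = ρ b a := fun a b => by
    conv_rhs => rw [← hρ]
    rfl
  ext x y
  rw [Matrix.conjTranspose_apply]
  show star (if ∀ i ∈ Aᶜ, y i = x i then
      Compat.reduce d A ρ (fun i => y i.1) (fun i => x i.1) else 0)
    = (if ∀ i ∈ Aᶜ, x i = y i then
      Compat.reduce d A ρ (fun i => x i.1) (fun i => y i.1) else 0)
  rw [apply_ite (star : ℂ → ℂ), star_zero]
  refine if_congr (forall₂_congr fun i _ => eq_comm) ?_ rfl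
  show star (∑ z : SubIdx d Aᶜ, ρ (glue d A (fun i => y i.1) z) (glue d A (fun i => x i.1) z)) = _
  rw [star_sum]
  exact Finset.sum_congr rfl fun z _ => hap _ _

lemma Sfull_herm (ρ : Matrix (Idx d) (Idx d) ℂ) (hρ : ρ.IsHermitian) :
    (Sfull d ρ).IsHermitian := by
  show (Sfull d ρ)ᴴ = Sfull d ρ
  rw [Sfull, Matrix.conjTranspose_sum]
  refine Finset.sum_congr rfl fun A _ => ?_
  rw [Matrix.conjTranspose_smul, embed_reduce_herm d A ρ hρ]
  congr 1
  simp

end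
end DeltaProofA

/-- For odd `n` and a density state `ρ` on `H`,
`Δ(ρ) = Σ_{A ⊊ N} (−1)^{|A|} (Tr_{N∖A} ρ) ⊗ 1_{N∖A}` is positive semidefinite. -/
theorem delta_posSemidef_of_density {n : ℕ} (d : Fin n → ℕ) (hn : 2 ≤ n) (hd : ∀ i, 1 ≤ d i)
    (hodd : Odd n) (ρ : Matrix (Compat.Idx d) (Compat.Idx d) ℂ) (hρ : Compat.IsDensity ρ) :
    (Compat.Δop d ρ).PosSemidef := by
  classical
  obtain ⟨hpos, -⟩ := hρ
  have hΔ : Compat.Δop d ρ = DeltaProofA.Sfull d ρ + ρ := by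
    have h1 : DeltaProofA.Sfull d ρ
        = ((-1:ℂ) ^ (Finset.univ : Finset (Fin n)).card) •
            Compat.embed d Finset.univ (Compat.reduce d Finset.univ ρ) + Compat.Δop d ρ := by
      rw [DeltaProofA.Sfull, Compat.Δop, Finset.filter_ne',
        ← Finset.add_sum_erase _ _ (Finset.mem_univ (Finset.univ : Finset (Fin n)))]
    rw [DeltaProofA.embed_univ d ρ, Finset.card_univ, Fintype.card_fin,
      Odd.neg_one_pow hodd, neg_one_smul] at h1
    rw [h1]
    abel
  rw [hΔ]
  have hsf : (DeltaProofA.Sfull d ρ).PosSemidef := by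
    rw [Matrix.posSemidef_iff_dotProduct_mulVec]
    constructor
    · exact DeltaProofA.Sfull_herm d ρ hpos.1
    · intro v
      have hgoal : star v ⬝ᵥ (DeltaProofA.Sfull d ρ).mulVec v = DeltaProof.core d ρ v :=
        DeltaProofA.lemA d ρ v
      rw [hgoal]
      have hsum : (0:ℂ) ≤ ∑ w : Compat.Idx d × Compat.Idx d,
          star (DeltaProof.fvec d v w.1 w.2) ⬝ᵥ ρ.mulVec (DeltaProof.fvec d v w.1 w.2) :=
        Finset.sum_nonneg fun w _ => hpos.dotProduct_mulVec_nonneg (DeltaProof.fvec d v w.1 w.2)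
      rw [DeltaProof.lemB d ρ v] at hsum
      have h2n : (0:ℂ) ≤ ((2:ℂ) ^ n)⁻¹ := by
        have : ((2:ℂ) ^ n)⁻¹ = ((((2:ℝ) ^ n)⁻¹ : ℝ) : ℂ) := by
          rw [Complex.ofReal_inv, Complex.ofReal_pow, Complex.ofReal_ofNat]
        rw [this]
        rw [Complex.zero_le_real]
        positivity
      calc (0:ℂ) ≤ ((2:ℂ) ^ n)⁻¹ * (2 ^ n * DeltaProof.core d ρ v) := mul_nonneg h2n hsum
        _ = DeltaProof.core d ρ v := by
            rw [← mul_assoc, inv_mul_cancel₀ (by positivity), one_mul]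
  exact hsf.add hpos
end

section
/- Let n be odd, suppose every system is a qubit (d_i = 2 for all i), and let ρ be a density state on H. Then Δ(ρ) ⪯ 1_H, i.e. 1_H − Δ(ρ) is positive semidefinite, where Δ(ρ) = Σ_{A ⊊ N} (−1)^{|A|} (Tr_{N∖A} ρ) ⊗ 1_{N∖A}. -/
open Matrix BigOperators
open scoped ComplexOrder

namespace QubitAux
open Compat Finset
open Complex (normSq)
open ComplexConjugate

variable {n : ℕ}

lemma embed_reduce_apply (d : Fin n → ℕ) (A : Finset (Fin n))
    (ρ : Matrix (Idx d) (Idx d) ℂ) (x y : Idx d) :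
    Compat.embed d A (Compat.reduce d A ρ) x y
      = ∑ w : Idx d, ∑ w' : Idx d, ρ w w' *
        ((if ∀ i ∈ A, w i = x i ∧ w' i = y i then (1:ℂ) else 0) *
         (if ∀ i ∈ Aᶜ, x i = y i ∧ w i = w' i then (1:ℂ) else 0)) := by
  classical
  have hcomb : ∀ w w' : Idx d, ρ w w' *
        ((if ∀ i ∈ A, w i = x i ∧ w' i = y i then (1:ℂ) else 0) *
         (if ∀ i ∈ Aᶜ, x i = y i ∧ w i = w' i then (1:ℂ) else 0))
      = if (∀ i ∈ A, w i = x i ∧ w' i = y i) ∧ (∀ i ∈ Aᶜ, x i = y i ∧ w i = w' i)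
        then ρ w w' else 0 := by
    intro w w'
    by_cases h1 : ∀ i ∈ A, w i = x i ∧ w' i = y i
    · by_cases h2 : ∀ i ∈ Aᶜ, x i = y i ∧ w i = w' i
      · rw [if_pos h1, if_pos h2, if_pos ⟨h1, h2⟩, mul_one, mul_one]
      · rw [if_pos h1, if_neg h2, if_neg (fun h => h2 h.2), one_mul, mul_zero]
    · rw [if_neg h1, if_neg (fun (h : _ ∧ _) => h1 h.1), zero_mul, mul_zero]
  simp only [hcomb]
  by_cases hC : ∀ i ∈ Aᶜ, x i = y i
  · rw [show Compat.embed d A (Compat.reduce d A ρ) x y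
        = Compat.reduce d A ρ (fun i => x i.1) (fun i => y i.1) from if_pos hC]
    rw [Compat.reduce]
    rw [← Finset.sum_product']
    rw [Finset.univ_product_univ]
    rw [← Finset.sum_filter]
    refine (Finset.sum_nbij' (fun z => ((Compat.glue d A (fun i => x i.1) z,
        Compat.glue d A (fun i => y i.1) z) : Idx d × Idx d))
      (fun p => (fun i => p.1 i.1 : SubIdx d Aᶜ)) ?_ ?_ ?_ ?_ ?_)
    · intro z _
      simp only [Finset.mem_filter, Finset.mem_univ, true_and]
      refine ⟨fun i hi => ?_, fun i hi => ?_⟩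
      · constructor <;> simp [Compat.glue, hi]
      · have hi' : i ∉ A := Finset.mem_compl.mp hi
        exact ⟨hC i hi, by simp [Compat.glue, hi']⟩
    · intro p hp
      exact Finset.mem_univ _
    · intro z _
      funext i
      have hi' : i.1 ∉ A := Finset.mem_compl.mp i.2
      simp [Compat.glue, hi']
    · intro p hp
      simp only [Finset.mem_filter, Finset.mem_univ, true_and] at hp
      obtain ⟨h1, h2⟩ := hp
      have e1 : Compat.glue d A (fun i => x i.1) (fun i => p.1 i.1) = p.1 := by
        funext k
        by_cases hk : k ∈ A
        · simp [Compat.glue, hk, (h1 k hk).1]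
        · simp [Compat.glue, hk]
      have e2 : Compat.glue d A (fun i => y i.1) (fun i => p.1 i.1) = p.2 := by
        funext k
        by_cases hk : k ∈ A
        · simp [Compat.glue, hk, (h1 k hk).2]
        · have := (h2 k (Finset.mem_compl.mpr hk)).2
          simp [Compat.glue, hk, this]
      show (Compat.glue d A (fun i => x i.1) (fun i => p.1 i.1),
        Compat.glue d A (fun i => y i.1) (fun i => p.1 i.1)) = p
      rw [e1, e2]
    · intro z _
      rfl
  · rw [show Compat.embed d A (Compat.reduce d A ρ) x y = 0 from if_neg hC]
    refine (Finset.sum_eq_zero fun w _ => Finset.sum_eq_zero fun w' _ => ?_).symm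
    exact if_neg (fun h => hC fun i hi => (h.2 i hi).1)

abbrev QI (n : ℕ) := ∀ _ : Fin n, Fin 2

def flip (x : QI n) : QI n := fun i => x i + 1

lemma flip_flip (x : QI n) : flip (flip x) = x := funext fun i => by
  have h : ∀ a : Fin 2, a + 1 + 1 = a := by decide
  exact h (x i)

def flipE : QI n ≃ QI n := ⟨flip, flip, flip_flip, flip_flip⟩

def sgn (x : QI n) : ℂ := ∏ i, (-1 : ℂ)^(x i : ℕ)

lemma conj_sgn (x : QI n) : (starRingEnd ℂ) (sgn x) = sgn x := by
  rw [sgn, map_prod]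
  exact Finset.prod_congr rfl fun i _ => by
    rw [map_pow, map_neg, _root_.map_one]

lemma sgn_mul_self (x : QI n) : sgn x * sgn x = 1 := by
  rw [sgn, ← Finset.prod_mul_distrib]
  refine Finset.prod_eq_one fun i _ => ?_
  rw [← pow_add, ← two_mul, pow_mul]
  norm_num

lemma sgn_flip (x : QI n) : sgn (flip x) = (-1:ℂ)^n * sgn x := by
  have h : ∀ a : Fin 2, ((-1:ℂ))^((a + 1 : Fin 2) : ℕ) = -1 * (-1)^((a : ℕ)) := by
    intro a; fin_cases a <;> norm_num [show ((2:Fin 2)).val = 0 from rfl, show ((1 + 1 : Fin 2)).val = 0 from rfl]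
  calc sgn (flip x) = ∏ i : Fin n, (-1 * (-1:ℂ)^((x i : ℕ))) :=
        Finset.prod_congr rfl fun i _ => h (x i)
    _ = (∏ _i : Fin n, (-1:ℂ)) * ∏ i : Fin n, (-1:ℂ)^((x i : ℕ)) :=
        Finset.prod_mul_distrib
    _ = (-1:ℂ)^n * sgn x := by
        rw [Finset.prod_const, Finset.card_univ, Fintype.card_fin, sgn]

lemma normSq_sgn (x : QI n) : Complex.normSq (sgn x) = 1 := by
  have h : ((Complex.normSq (sgn x) : ℂ)) = ((1:ℝ) : ℂ) := by
    rw [← Complex.mul_conj, conj_sgn, sgn_mul_self]; norm_num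
  exact_mod_cast h

lemma boole_mul_ite {P : Prop} [Decidable P] (c : ℂ) :
    (if P then c else 0) = (if P then (1:ℂ) else 0) * c := by
  split <;> simp

lemma coordL (a b c e : Fin 2) :
    (if a = b ∧ c = e then (1:ℂ) else 0) - (if c = a ∧ e = b then 1 else 0)
      = if c = b + 1 ∧ e = a + 1 then ((-1:ℂ))^(a:ℕ) * (-1)^(b:ℕ) else 0 := by
  fin_cases a <;> fin_cases b <;> fin_cases c <;> fin_cases e <;>
    norm_num [Fin.ext_iff, show ((2:Fin 2)).val = 0 from rfl, show ((1 + 1 : Fin 2)).val = 0 from rfl]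

lemma subset_sum_eval (x y w w' : QI n) :
    ∑ A : Finset (Fin n), ((-1:ℂ)^A.card) *
      ((if ∀ i ∈ A, w i = x i ∧ w' i = y i then (1:ℂ) else 0) *
       (if ∀ i ∈ Aᶜ, x i = y i ∧ w i = w' i then (1:ℂ) else 0))
    = (if w = flip y ∧ w' = flip x then (1:ℂ) else 0) * (sgn x * sgn y) := by
  classical
  have step1 : ∀ A : Finset (Fin n), ((-1:ℂ)^A.card) *
      ((if ∀ i ∈ A, w i = x i ∧ w' i = y i then (1:ℂ) else 0) *
       (if ∀ i ∈ Aᶜ, x i = y i ∧ w i = w' i then (1:ℂ) else 0))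
      = (∏ i ∈ A, (-(if w i = x i ∧ w' i = y i then (1:ℂ) else 0))) *
        (∏ i ∈ Finset.univ \ A, (if x i = y i ∧ w i = w' i then (1:ℂ) else 0)) := by
    intro A
    rw [Finset.prod_congr rfl fun i (_ : i ∈ A) =>
        (neg_one_mul ((if w i = x i ∧ w' i = y i then (1:ℂ) else 0))).symm,
      Finset.prod_mul_distrib, Finset.prod_const, Finset.prod_boole, Finset.prod_boole,
      ← Finset.compl_eq_univ_sdiff]
    ring
  rw [Finset.sum_congr rfl fun A _ => step1 A, ← Finset.powerset_univ, ← Finset.prod_add]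
  have coord : ∀ i : Fin n,
      (-(if w i = x i ∧ w' i = y i then (1:ℂ) else 0)
        + (if x i = y i ∧ w i = w' i then (1:ℂ) else 0))
      = (if w i = y i + 1 ∧ w' i = x i + 1 then (1:ℂ) else 0) *
          (((-1:ℂ))^((x i : ℕ)) * (-1)^((y i : ℕ))) := by
    intro i
    rw [neg_add_eq_sub, coordL (x i) (y i) (w i) (w' i), boole_mul_ite]
  rw [Finset.prod_congr rfl fun i _ => coord i, Finset.prod_mul_distrib]
  congr 1
  · by_cases hP : w = flip y ∧ w' = flip x
    · rw [if_pos hP]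
      exact Finset.prod_eq_one fun i _ =>
        if_pos ⟨congrFun hP.1 i, congrFun hP.2 i⟩
    · rw [if_neg hP]
      rcases not_and_or.mp hP with h | h
      · obtain ⟨i, hi⟩ := Function.ne_iff.mp h
        exact Finset.prod_eq_zero (Finset.mem_univ i) (if_neg fun hc => hi hc.1)
      · obtain ⟨i, hi⟩ := Function.ne_iff.mp h
        exact Finset.prod_eq_zero (Finset.mem_univ i) (if_neg fun hc => hi hc.2)
  · rw [Finset.prod_mul_distrib]; rfl

lemma sum_all_apply (ρ : Matrix (QI n) (QI n) ℂ) (x y : QI n) :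
    ∑ A : Finset (Fin n),
        ((-1:ℂ)^A.card) * Compat.embed (fun _ => 2) A (Compat.reduce (fun _ => 2) A ρ) x y
      = sgn x * sgn y * ρ (flip y) (flip x) := by
  classical
  calc ∑ A : Finset (Fin n),
        ((-1:ℂ)^A.card) * Compat.embed (fun _ => 2) A (Compat.reduce (fun _ => 2) A ρ) x y
      = ∑ A : Finset (Fin n), ∑ w : QI n, ∑ w' : QI n, ρ w w' * (((-1:ℂ)^A.card) *
          ((if ∀ i ∈ A, w i = x i ∧ w' i = y i then (1:ℂ) else 0) *
           (if ∀ i ∈ Aᶜ, x i = y i ∧ w i = w' i then (1:ℂ) else 0))) := by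
        refine Finset.sum_congr rfl fun A _ => ?_
        rw [embed_reduce_apply (fun _ => 2) A ρ x y, Finset.mul_sum]
        refine Finset.sum_congr rfl fun w _ => ?_
        rw [Finset.mul_sum]
        refine Finset.sum_congr rfl fun w' _ => ?_
        ring
    _ = ∑ w : QI n, ∑ w' : QI n, ρ w w' * ∑ A : Finset (Fin n), (((-1:ℂ)^A.card) *
          ((if ∀ i ∈ A, w i = x i ∧ w' i = y i then (1:ℂ) else 0) *
           (if ∀ i ∈ Aᶜ, x i = y i ∧ w i = w' i then (1:ℂ) else 0))) := by
        rw [Finset.sum_comm]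
        refine Finset.sum_congr rfl fun w _ => ?_
        rw [Finset.sum_comm]
        refine Finset.sum_congr rfl fun w' _ => ?_
        rw [Finset.mul_sum]
    _ = ∑ w : QI n, ∑ w' : QI n, ρ w w' *
          ((if w = flip y ∧ w' = flip x then (1:ℂ) else 0) * (sgn x * sgn y)) := by
        refine Finset.sum_congr rfl fun w _ => Finset.sum_congr rfl fun w' _ => ?_
        rw [subset_sum_eval]
    _ = sgn x * sgn y * ρ (flip y) (flip x) := by
        have h1 : ∀ w : QI n, (∑ w' : QI n, ρ w w' *
            ((if w = flip y ∧ w' = flip x then (1:ℂ) else 0) * (sgn x * sgn y)))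
            = if w = flip y then ρ w (flip x) * (sgn x * sgn y) else 0 := by
          intro w
          by_cases hw : w = flip y
          · simp only [hw, true_and, if_true, mul_ite, ite_mul, mul_zero, zero_mul, one_mul]
            rw [Finset.sum_ite_eq' Finset.univ (flip x)]
            simp
          · simp [hw]
        rw [Finset.sum_congr rfl fun w _ => h1 w, Finset.sum_ite_eq' Finset.univ (flip y)]
        simp only [Finset.mem_univ, if_true]
        ring

lemma embed_reduce_univ (d : Fin n → ℕ) (ρ : Matrix (Idx d) (Idx d) ℂ) :
    Compat.embed d Finset.univ (Compat.reduce d Finset.univ ρ) = ρ := by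
  funext x y
  have hC : ∀ i ∈ (Finset.univ : Finset (Fin n))ᶜ, x i = y i := by simp
  rw [show Compat.embed d Finset.univ (Compat.reduce d Finset.univ ρ) x y
      = Compat.reduce d Finset.univ ρ (fun i => x i.1) (fun i => y i.1) from if_pos hC,
    Compat.reduce]
  haveI : IsEmpty {i : Fin n // i ∈ (Finset.univ : Finset (Fin n))ᶜ} :=
    ⟨fun i => by simpa using i.2⟩
  have hg : ∀ z : SubIdx d (Finset.univ : Finset (Fin n))ᶜ,
      ρ (Compat.glue d Finset.univ (fun i => x i.1) z)
        (Compat.glue d Finset.univ (fun i => y i.1) z) = ρ x y := by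
    intro z
    have e1 : Compat.glue d Finset.univ (fun i => x i.1) z = x := by
      funext k; simp [Compat.glue]
    have e2 : Compat.glue d Finset.univ (fun i => y i.1) z = y := by
      funext k; simp [Compat.glue]
    rw [e1, e2]
  rw [Finset.sum_congr rfl fun z _ => hg z, Finset.sum_const, Finset.card_univ]
  simp

lemma delta_apply (hodd : Odd n) (ρ : Matrix (QI n) (QI n) ℂ) (x y : QI n) :
    Compat.Δop (fun _ : Fin n => 2) ρ x y
      = sgn x * sgn y * ρ (flip y) (flip x) + ρ x y := by
  classical
  rw [Compat.Δop]
  rw [Finset.filter_ne' Finset.univ Finset.univ]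
  have happ : (∑ A ∈ (Finset.univ : Finset (Finset (Fin n))).erase Finset.univ,
      ((-1 : ℂ) ^ A.card) • Compat.embed (fun _ => 2) A (Compat.reduce (fun _ => 2) A ρ)) x y
      = ∑ A ∈ (Finset.univ : Finset (Finset (Fin n))).erase Finset.univ,
        ((-1 : ℂ) ^ A.card) * Compat.embed (fun _ => 2) A (Compat.reduce (fun _ => 2) A ρ) x y := by
    rw [Matrix.sum_apply]
    exact Finset.sum_congr rfl fun A _ => rfl
  rw [happ, Finset.sum_erase_eq_sub (Finset.mem_univ _), sum_all_apply,
    embed_reduce_univ, Finset.card_univ, Fintype.card_fin, hodd.neg_one_pow]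
  ring

lemma bessel {ι : Type*} [Fintype ι] (x u g : ι → ℂ)
    (hnrm : ∑ a, normSq (u a) = ∑ a, normSq (x a))
    (ho : ∑ a, (starRingEnd ℂ) (x a) * u a = 0) :
    normSq (∑ a, g a * x a) + normSq (∑ a, g a * u a)
      ≤ (∑ a, normSq (g a)) * (∑ a, normSq (x a)) := by
  classical
  set sR : ℝ := ∑ a, normSq (x a) with hsR
  have hs0 : 0 ≤ sR := Finset.sum_nonneg fun a _ => Complex.normSq_nonneg _
  rcases eq_or_lt_of_le hs0 with hz | hpos
  · have hx0 : ∀ a, x a = 0 := by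
      intro a
      exact Complex.normSq_eq_zero.mp ((Finset.sum_eq_zero_iff_of_nonneg
        (fun a _ => Complex.normSq_nonneg (x a))).mp (hsR.symm.trans hz.symm) a
        (Finset.mem_univ a))
    have hu0 : ∀ a, u a = 0 := by
      intro a
      exact Complex.normSq_eq_zero.mp ((Finset.sum_eq_zero_iff_of_nonneg
        (fun a _ => Complex.normSq_nonneg (u a))).mp (hnrm.trans hz.symm) a
        (Finset.mem_univ a))
    have e1 : ∑ a, g a * x a = 0 :=
      Finset.sum_eq_zero fun a _ => by rw [hx0 a, mul_zero]
    have e2 : ∑ a, g a * u a = 0 :=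
      Finset.sum_eq_zero fun a _ => by rw [hu0 a, mul_zero]
    rw [e1, e2, Complex.normSq_zero]
    simpa using mul_nonneg (Finset.sum_nonneg fun a _ => Complex.normSq_nonneg (g a)) hs0
  · set α : ℂ := ∑ a, g a * x a with hα
    set β : ℂ := ∑ a, g a * u a with hβ
    set W : ι → ℂ := fun a =>
      (sR : ℂ) * (starRingEnd ℂ) (g a) - (starRingEnd ℂ) α * x a - (starRingEnd ℂ) β * u a
      with hW
    have conjW : ∀ a, (starRingEnd ℂ) (W a)
        = (sR : ℂ) * g a - α * (starRingEnd ℂ) (x a) - β * (starRingEnd ℂ) (u a) := by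
      intro a
      simp only [hW, map_sub, _root_.map_mul, Complex.conj_ofReal, Complex.conj_conj]
    have expand : ∀ a, (starRingEnd ℂ) (W a) * W a =
        ((sR : ℂ) * (sR : ℂ)) * (g a * (starRingEnd ℂ) (g a))
        - ((sR : ℂ) * (starRingEnd ℂ) α) * (g a * x a)
        - ((sR : ℂ) * (starRingEnd ℂ) β) * (g a * u a)
        - ((sR : ℂ) * α) * ((starRingEnd ℂ) (x a) * (starRingEnd ℂ) (g a))
        + (α * (starRingEnd ℂ) α) * ((starRingEnd ℂ) (x a) * x a)
        + (α * (starRingEnd ℂ) β) * ((starRingEnd ℂ) (x a) * u a)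
        - ((sR : ℂ) * β) * ((starRingEnd ℂ) (u a) * (starRingEnd ℂ) (g a))
        + (β * (starRingEnd ℂ) α) * ((starRingEnd ℂ) (u a) * x a)
        + (β * (starRingEnd ℂ) β) * ((starRingEnd ℂ) (u a) * u a) := by
      intro a
      rw [conjW a]
      show ((sR : ℂ) * g a - α * (starRingEnd ℂ) (x a) - β * (starRingEnd ℂ) (u a)) *
        ((sR : ℂ) * (starRingEnd ℂ) (g a) - (starRingEnd ℂ) α * x a
          - (starRingEnd ℂ) β * u a) = _
      ring
    have hgg : ∑ a, g a * (starRingEnd ℂ) (g a) = ((∑ a, normSq (g a) : ℝ) : ℂ) := by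
      push_cast
      exact Finset.sum_congr rfl fun a _ => (Complex.mul_conj (g a))
    have hxx : ∑ a, (starRingEnd ℂ) (x a) * x a = ((sR : ℝ) : ℂ) := by
      rw [hsR]; push_cast
      exact Finset.sum_congr rfl fun a _ => by rw [mul_comm, Complex.mul_conj]
    have huu : ∑ a, (starRingEnd ℂ) (u a) * u a = ((sR : ℝ) : ℂ) := by
      rw [← hnrm]; push_cast
      exact Finset.sum_congr rfl fun a _ => by rw [mul_comm, Complex.mul_conj]
    have hxg : ∑ a, (starRingEnd ℂ) (x a) * (starRingEnd ℂ) (g a) = (starRingEnd ℂ) α := by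
      rw [hα, map_sum]
      refine Finset.sum_congr rfl fun a _ => ?_
      rw [_root_.map_mul]; ring
    have hug : ∑ a, (starRingEnd ℂ) (u a) * (starRingEnd ℂ) (g a) = (starRingEnd ℂ) β := by
      rw [hβ, map_sum]
      refine Finset.sum_congr rfl fun a _ => ?_
      rw [_root_.map_mul]; ring
    have hux : ∑ a, (starRingEnd ℂ) (u a) * x a = 0 := by
      have h2 : ∑ a, (starRingEnd ℂ) (u a) * x a
          = (starRingEnd ℂ) (∑ a, (starRingEnd ℂ) (x a) * u a) := by
        rw [map_sum]
        refine Finset.sum_congr rfl fun a _ => ?_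
        rw [_root_.map_mul, Complex.conj_conj]; ring
      rw [h2, ho, map_zero]
    have hsum : ∑ a, (starRingEnd ℂ) (W a) * W a
        = (sR : ℂ) * ((sR : ℂ) * ((∑ a, normSq (g a) : ℝ) : ℂ)
            - α * (starRingEnd ℂ) α - β * (starRingEnd ℂ) β) := by
      rw [Finset.sum_congr rfl fun a _ => expand a]
      simp only [Finset.sum_add_distrib, Finset.sum_sub_distrib, ← Finset.mul_sum]
      rw [hgg, hxx, huu, hxg, hug, hux, ho, ← hα, ← hβ]
      ring
    have hre : ∑ a, normSq (W a)
        = sR * (sR * (∑ a, normSq (g a)) - normSq α - normSq β) := by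
      have h3 : ((∑ a, normSq (W a) : ℝ) : ℂ)
          = ((sR * (sR * (∑ a, normSq (g a)) - normSq α - normSq β) : ℝ) : ℂ) := by
        calc ((∑ a, normSq (W a) : ℝ) : ℂ)
            = ∑ a, (starRingEnd ℂ) (W a) * W a := by
              push_cast
              refine Finset.sum_congr rfl fun a _ => ?_
              rw [mul_comm, Complex.mul_conj]
          _ = (sR : ℂ) * ((sR : ℂ) * ((∑ a, normSq (g a) : ℝ) : ℂ)
                - α * (starRingEnd ℂ) α - β * (starRingEnd ℂ) β) := hsum
          _ = _ := by
              rw [Complex.mul_conj, Complex.mul_conj]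
              push_cast
              ring
      exact_mod_cast h3
    have hWpos : 0 ≤ ∑ a, normSq (W a) :=
      Finset.sum_nonneg fun a _ => Complex.normSq_nonneg _
    rw [hre] at hWpos
    have h4 := (mul_nonneg_iff_of_pos_left hpos).mp hWpos
    linarith

lemma sum_flip {M : Type*} [AddCommMonoid M] (f : QI n → M) :
    ∑ a, f (flip a) = ∑ a, f a :=
  Fintype.sum_equiv flipE _ _ (fun _ => rfl)

def uvec (v : QI n → ℂ) : QI n → ℂ := fun a => sgn a * (starRingEnd ℂ) (v (flip a))

lemma orth (hodd : Odd n) (v : QI n → ℂ) :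
    ∑ a, (starRingEnd ℂ) (v a) * uvec v a = 0 := by
  have hneg : ∑ a, (starRingEnd ℂ) (v a) * uvec v a
      = -∑ a, (starRingEnd ℂ) (v a) * uvec v a := by
    calc ∑ a, (starRingEnd ℂ) (v a) * uvec v a
        = ∑ a, (starRingEnd ℂ) (v (flip a)) *
            (sgn (flip a) * (starRingEnd ℂ) (v (flip (flip a)))) :=
          (sum_flip fun a => (starRingEnd ℂ) (v a) * uvec v a).symm
      _ = ∑ a, -((starRingEnd ℂ) (v a) * uvec v a) := by
          refine Finset.sum_congr rfl fun a _ => ?_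
          rw [flip_flip, sgn_flip, hodd.neg_one_pow, uvec]
          ring
      _ = -∑ a, (starRingEnd ℂ) (v a) * uvec v a := by
          rw [Finset.sum_neg_distrib]
  have h2 : (2:ℂ) * ∑ a, (starRingEnd ℂ) (v a) * uvec v a = 0 := by
    linear_combination hneg
  exact (mul_eq_zero.mp h2).resolve_left two_ne_zero

lemma norm_uvec (v : QI n → ℂ) : ∑ a, normSq (uvec v a) = ∑ a, normSq (v a) := by
  have h1 : ∀ a, normSq (uvec v a) = normSq (v (flip a)) := by
    intro a
    rw [uvec, Complex.normSq_mul, normSq_sgn, one_mul, Complex.normSq_conj]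
  rw [Finset.sum_congr rfl fun a _ => h1 a]
  exact sum_flip (fun a => normSq (v a))

lemma S_reindex (v : QI n → ℂ) (ρ : Matrix (QI n) (QI n) ℂ) :
    ∑ a, ∑ b, (starRingEnd ℂ) (v a) * (sgn a * sgn b * ρ (flip b) (flip a)) * v b
      = ∑ a, ∑ b, (starRingEnd ℂ) (uvec v a) * ρ a b * uvec v b := by
  have hsq : ((-1:ℂ)^n) * ((-1:ℂ)^n) = 1 := by
    rw [← mul_pow]; norm_num
  calc ∑ a, ∑ b, (starRingEnd ℂ) (v a) * (sgn a * sgn b * ρ (flip b) (flip a)) * v b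
      = ∑ a, ∑ b, (starRingEnd ℂ) (v (flip a)) *
          (sgn (flip a) * sgn (flip b) * ρ (flip (flip b)) (flip (flip a))) * v (flip b) := by
        rw [← sum_flip (f := fun a => ∑ b, (starRingEnd ℂ) (v a) *
          (sgn a * sgn b * ρ (flip b) (flip a)) * v b)]
        refine Finset.sum_congr rfl fun a _ => ?_
        rw [← sum_flip (f := fun b => (starRingEnd ℂ) (v (flip a)) *
          (sgn (flip a) * sgn b * ρ (flip b) (flip (flip a))) * v b)]
    _ = ∑ a, ∑ b, (starRingEnd ℂ) (v (flip a)) * (sgn a * sgn b * ρ b a) * v (flip b) := by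
        refine Finset.sum_congr rfl fun a _ => Finset.sum_congr rfl fun b _ => ?_
        rw [flip_flip, flip_flip, sgn_flip, sgn_flip]
        linear_combination ((starRingEnd ℂ) (v (flip a)) * v (flip b) * ρ b a *
          sgn a * sgn b) * hsq
    _ = ∑ b, ∑ a, (starRingEnd ℂ) (v (flip a)) * (sgn a * sgn b * ρ b a) * v (flip b) :=
        Finset.sum_comm
    _ = ∑ a, ∑ b, (starRingEnd ℂ) (uvec v a) * ρ a b * uvec v b := by
        refine Finset.sum_congr rfl fun a _ => Finset.sum_congr rfl fun b _ => ?_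
        rw [show (starRingEnd ℂ) (uvec v a) = sgn a * v (flip a) from by
          rw [uvec, _root_.map_mul, conj_sgn, Complex.conj_conj], uvec]
        ring

lemma quad_eq {m : Type*} [Fintype m] (B : Matrix m m ℂ) (w : m → ℂ) :
    ∑ a, ∑ b, (starRingEnd ℂ) (w a) * ((Bᴴ * B) a b) * w b
      = ((∑ k, normSq (∑ a, B k a * w a) : ℝ) : ℂ) := by
  classical
  calc ∑ a, ∑ b, (starRingEnd ℂ) (w a) * ((Bᴴ * B) a b) * w b
      = ∑ a, ∑ b, ∑ k, (B k b * w b) * ((starRingEnd ℂ) (B k a) * (starRingEnd ℂ) (w a)) := by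
        refine Finset.sum_congr rfl fun a _ => Finset.sum_congr rfl fun b _ => ?_
        rw [Matrix.mul_apply, Finset.mul_sum, Finset.sum_mul]
        refine Finset.sum_congr rfl fun k _ => ?_
        rw [Matrix.conjTranspose_apply, Complex.star_def]
        ring
    _ = ∑ b, ∑ a, ∑ k, (B k b * w b) * ((starRingEnd ℂ) (B k a) * (starRingEnd ℂ) (w a)) :=
        Finset.sum_comm
    _ = ∑ b, ∑ k, ∑ a, (B k b * w b) * ((starRingEnd ℂ) (B k a) * (starRingEnd ℂ) (w a)) :=
        Finset.sum_congr rfl fun b _ => Finset.sum_comm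
    _ = ∑ k, ∑ b, ∑ a, (B k b * w b) * ((starRingEnd ℂ) (B k a) * (starRingEnd ℂ) (w a)) :=
        Finset.sum_comm
    _ = ∑ k, (∑ b, B k b * w b) * (∑ a, (starRingEnd ℂ) (B k a) * (starRingEnd ℂ) (w a)) := by
        refine Finset.sum_congr rfl fun k _ => ?_
        rw [Finset.sum_mul_sum]
    _ = ((∑ k, normSq (∑ a, B k a * w a) : ℝ) : ℂ) := by
        push_cast
        refine Finset.sum_congr rfl fun k _ => ?_
        have hc : ∑ a, (starRingEnd ℂ) (B k a) * (starRingEnd ℂ) (w a)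
            = (starRingEnd ℂ) (∑ a, B k a * w a) := by
          rw [map_sum]
          exact Finset.sum_congr rfl fun a _ => (_root_.map_mul _ _ _).symm
        rw [hc, Complex.mul_conj]

lemma trace_eq {m : Type*} [Fintype m] (B : Matrix m m ℂ) :
    (Bᴴ * B).trace = ((∑ k, ∑ a, normSq (B k a) : ℝ) : ℂ) := by
  classical
  rw [Matrix.trace]
  push_cast
  rw [Finset.sum_comm]
  refine Finset.sum_congr rfl fun a _ => ?_
  rw [Matrix.diag_apply, Matrix.mul_apply]
  refine Finset.sum_congr rfl fun k _ => ?_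
  rw [Matrix.conjTranspose_apply, Complex.star_def, mul_comm, Complex.mul_conj]

lemma delta_isHermitian (hodd : Odd n) (ρ : Matrix (QI n) (QI n) ℂ)
    (hρH : ρ.IsHermitian) : (Compat.Δop (fun _ : Fin n => 2) ρ).IsHermitian := by
  apply Matrix.ext
  intro a b
  rw [Matrix.conjTranspose_apply, Complex.star_def, delta_apply hodd, delta_apply hodd,
    map_add, _root_.map_mul, _root_.map_mul, conj_sgn, conj_sgn]
  have h1 : (starRingEnd ℂ) (ρ (flip a) (flip b)) = ρ (flip b) (flip a) :=
    hρH.apply (flip b) (flip a)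
  have h2 : (starRingEnd ℂ) (ρ b a) = ρ a b := hρH.apply a b
  rw [h1, h2]
  ring

end QubitAux

open Matrix BigOperators
open scoped ComplexOrder

/-- For odd `n` and qubits (`d i = 2`), a density state `ρ` on `H`
satisfies `Δ(ρ) ⪯ 1`, i.e. `1 − Δ(ρ)` is positive semidefinite. -/
theorem one_sub_delta_posSemidef_of_density_qubits {n : ℕ} (hn : 2 ≤ n) (hodd : Odd n)
    (ρ : Matrix (Compat.Idx (fun _ : Fin n => 2)) (Compat.Idx (fun _ : Fin n => 2)) ℂ)
    (hρ : Compat.IsDensity ρ) :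
    (1 - Compat.Δop (fun _ : Fin n => 2) ρ).PosSemidef := by

  classical
  obtain ⟨hPSD, htr⟩ := hρ
  obtain ⟨B, hB⟩ : ∃ B : Matrix (QubitAux.QI n) (QubitAux.QI n) ℂ, ρ = Bᴴ * B := by
    open scoped MatrixOrder in exact CStarAlgebra.nonneg_iff_eq_star_mul_self.mp hPSD.nonneg
  refine Matrix.PosSemidef.of_dotProduct_mulVec_nonneg ?_ ?_
  · exact Matrix.isHermitian_one.sub (QubitAux.delta_isHermitian hodd ρ hPSD.1)
  · intro v
    have h1 : ∀ a b : QubitAux.QI n,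
        (starRingEnd ℂ) (v a) * ((1 - Compat.Δop (fun _ : Fin n => 2) ρ) a b * v b)
        = (if a = b then (starRingEnd ℂ) (v a) * v b else 0)
          - (starRingEnd ℂ) (v a) *
              (QubitAux.sgn a * QubitAux.sgn b * ρ (QubitAux.flip b) (QubitAux.flip a)) * v b
          - (starRingEnd ℂ) (v a) * ρ a b * v b := by
      intro a b
      rw [Matrix.sub_apply, Matrix.one_apply, QubitAux.delta_apply hodd]
      by_cases hab : a = b
      · rw [if_pos hab, if_pos hab]; ring
      · rw [if_neg hab, if_neg hab]; ring
    have h0 : star v ⬝ᵥ (1 - Compat.Δop (fun _ : Fin n => 2) ρ) *ᵥ v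
        = ∑ a, ∑ b, (starRingEnd ℂ) (v a) *
            ((1 - Compat.Δop (fun _ : Fin n => 2) ρ) a b * v b) := by
      simp only [dotProduct, Matrix.mulVec, Pi.star_apply, Complex.star_def,
        Finset.mul_sum]
    rw [h0, Finset.sum_congr rfl fun a _ => Finset.sum_congr rfl fun b _ => h1 a b]
    simp only [Finset.sum_sub_distrib]
    have hdiag : ∑ a : QubitAux.QI n, ∑ b : QubitAux.QI n,
        (if a = b then (starRingEnd ℂ) (v a) * v b else 0)
        = ((∑ a, Complex.normSq (v a) : ℝ) : ℂ) := by
      push_cast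
      refine Finset.sum_congr rfl fun a _ => ?_
      rw [Finset.sum_ite_eq]
      simp only [Finset.mem_univ, if_true]
      rw [mul_comm, Complex.mul_conj]
    rw [hdiag, QubitAux.S_reindex, hB, QubitAux.quad_eq, QubitAux.quad_eq]
    -- trace identity
    have htrR : ∑ k, ∑ a, Complex.normSq (B k a) = 1 := by
      have h2 : ((∑ k, ∑ a, Complex.normSq (B k a) : ℝ) : ℂ) = ((1:ℝ) : ℂ) := by
        rw [← QubitAux.trace_eq, ← hB, htr]; norm_num
      exact_mod_cast h2
    have hbes : ∀ k : QubitAux.QI n,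
        Complex.normSq (∑ a, B k a * QubitAux.uvec v a)
          + Complex.normSq (∑ a, B k a * v a)
        ≤ (∑ a, Complex.normSq (B k a)) * (∑ a, Complex.normSq (v a)) := by
      intro k
      have := QubitAux.bessel v (QubitAux.uvec v) (fun a => B k a)
        (QubitAux.norm_uvec v) (QubitAux.orth hodd v)
      linarith
    have hsumbes : (∑ k, Complex.normSq (∑ a, B k a * QubitAux.uvec v a))
        + (∑ k, Complex.normSq (∑ a, B k a * v a))
        ≤ ∑ a, Complex.normSq (v a) := by
      have h3 := Finset.sum_le_sum (fun k (_ : k ∈ Finset.univ) => hbes k)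
      rw [Finset.sum_add_distrib, ← Finset.sum_mul, htrR, one_mul] at h3
      exact h3
    have hfin : (0:ℝ) ≤ (∑ a, Complex.normSq (v a))
        - (∑ k, Complex.normSq (∑ a, B k a * QubitAux.uvec v a))
        - (∑ k, Complex.normSq (∑ a, B k a * v a)) := by linarith
    have hcast : ((((∑ a, Complex.normSq (v a))
        - (∑ k, Complex.normSq (∑ a, B k a * QubitAux.uvec v a))
        - (∑ k, Complex.normSq (∑ a, B k a * v a)) : ℝ)) : ℂ)
        = ((∑ a, Complex.normSq (v a) : ℝ) : ℂ)
          - ((∑ k, Complex.normSq (∑ a, B k a * QubitAux.uvec v a) : ℝ) : ℂ)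
          - ((∑ k, Complex.normSq (∑ a, B k a * v a) : ℝ) : ℂ) := by
      push_cast; ring
    rw [← hcast]
    exact Complex.zero_le_real.mpr hfin
end

section
/- A tuple W ∈ O is a compatibility witness if and only if the operator p(W) = Σ_{i=1}^n W_i ⊗ 1_i on H is positive semidefinite. -/
open Matrix BigOperators
open scoped ComplexOrder

namespace Compat
variable {n : ℕ} (d : Fin n → ℕ)

lemma glue_restr_left (B : Finset (Fin n)) (x : SubIdx d B) (z : SubIdx d Bᶜ) :
    (fun i : B => glue d B x z i.1) = x := by
  funext i; simp [glue, i.2]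

lemma glue_restr_right (B : Finset (Fin n)) (x : SubIdx d B) (z : SubIdx d Bᶜ) :
    (fun i : ↥(Bᶜ) => glue d B x z i.1) = z := by
  funext i
  have h : i.1 ∉ B := Finset.mem_compl.mp i.2
  simp [glue, h]

def split (B : Finset (Fin n)) : Idx d ≃ SubIdx d B × SubIdx d Bᶜ where
  toFun X := (fun i => X i.1, fun i => X i.1)
  invFun p := glue d B p.1 p.2
  left_inv X := by funext i; dsimp only; by_cases h : i ∈ B <;> simp [glue, h]
  right_inv p := by
    obtain ⟨x, z⟩ := p
    exact Prod.ext (glue_restr_left d B x z) (glue_restr_right d B x z)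

lemma embed_glue (B : Finset (Fin n)) (M : Matrix (SubIdx d B) (SubIdx d B) ℂ)
    (x y : SubIdx d B) (z w : SubIdx d Bᶜ) :
    embed d B M (glue d B x z) (glue d B y w) = if z = w then M x y else 0 := by
  unfold embed
  have hcond : (∀ i ∈ Bᶜ, glue d B x z i = glue d B y w i) ↔ z = w := by
    constructor
    · intro h; funext i
      have := h i.1 i.2
      simpa [glue, Finset.mem_compl.mp i.2] using this
    · rintro rfl i hi
      simp [glue, Finset.mem_compl.mp hi]
  simp only [glue_restr_left, hcond]

end Compat
namespace Compat
variable {n : ℕ} (d : Fin n → ℕ)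

lemma trace_embed_mul (B : Finset (Fin n)) (M : Matrix (SubIdx d B) (SubIdx d B) ℂ)
    (ρ : Matrix (Idx d) (Idx d) ℂ) :
    (embed d B M * ρ).trace = (M * reduce d B ρ).trace := by
  have hsum : ∀ f : Idx d → ℂ, (∑ X, f X) = ∑ p : SubIdx d B × SubIdx d Bᶜ, f (glue d B p.1 p.2) :=
    fun f => (Equiv.sum_comp (split d B).symm f).symm
  simp only [Matrix.trace, Matrix.diag, Matrix.mul_apply, reduce]
  simp only [hsum]
  simp only [embed_glue, ite_mul, zero_mul, Fintype.sum_prod_type, Finset.sum_ite_eq,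
    Finset.mem_univ, if_true, Finset.mul_sum]
  exact Finset.sum_congr rfl fun x _ => Finset.sum_comm

end Compat
namespace Compat
variable {n : ℕ} (d : Fin n → ℕ)

lemma trace_pW_mul (W : Tuple d) (ρ : Matrix (Idx d) (Idx d) ℂ) :
    (pW d W * ρ).trace = ∑ i, ((W i) * reduce d ({i}ᶜ) ρ).trace := by
  unfold pW
  rw [Finset.sum_mul, Matrix.trace_sum]
  exact Finset.sum_congr rfl fun i _ => trace_embed_mul d _ _ _

lemma cwip_reduce (W : Tuple d) (ρ : Matrix (Idx d) (Idx d) ℂ) :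
    cwip d W (fun i => reduce d ({i}ᶜ) ρ) = ((pW d W * ρ).trace).re := by
  rw [cwip, trace_pW_mul]

lemma embed_isHermitian (B : Finset (Fin n)) {M : Matrix (SubIdx d B) (SubIdx d B) ℂ}
    (hM : M.IsHermitian) : (embed d B M).IsHermitian := by
  ext X Y
  simp only [Matrix.conjTranspose_apply, embed]
  by_cases h : ∀ i ∈ Bᶜ, X i = Y i
  · rw [if_pos (fun i hi => (h i hi).symm), if_pos h]
    exact (Matrix.conjTranspose_apply M _ _).symm.trans (by rw [hM.eq])
  · rw [if_neg (fun hc => h fun i hi => (hc i hi).symm), if_neg h, star_zero]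

lemma pW_isHermitian {W : Tuple d} (hherm : IsHermTuple d W) : (pW d W).IsHermitian := by
  unfold pW Matrix.IsHermitian
  rw [Matrix.conjTranspose_sum]
  exact Finset.sum_congr rfl fun i _ => (embed_isHermitian d _ (hherm i)).eq

lemma psd_trace_nonneg {m : Type*} [Fintype m] [DecidableEq m] {M : Matrix m m ℂ}
    (hM : M.PosSemidef) : 0 ≤ M.trace := by
  refine Finset.sum_nonneg fun i _ => ?_
  simpa [dotProduct, Matrix.mulVec, Pi.single_apply] using hM.dotProduct_mulVec_nonneg (Pi.single i 1)

lemma trace_mul_psd_nonneg {m : Type*} [Fintype m] [DecidableEq m]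
    {A B : Matrix m m ℂ} (hA : A.PosSemidef) (hB : B.PosSemidef) : 0 ≤ (A * B).trace := by
  obtain ⟨C, rfl⟩ : ∃ C : Matrix m m ℂ, B = Cᴴ * C := by
    open scoped MatrixOrder in
    exact ⟨CFC.sqrt B, by
      rw [← Matrix.star_eq_conjTranspose, (CFC.sqrt_nonneg B).isSelfAdjoint.star_eq,
        CFC.sqrt_mul_sqrt_self B hB.nonneg]⟩
  rw [← Matrix.mul_assoc, Matrix.trace_mul_comm, ← Matrix.mul_assoc]
  exact psd_trace_nonneg (hA.mul_mul_conjTranspose_same C)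

lemma trace_mul_vecMulVec {m : Type*} [Fintype m] (A : Matrix m m ℂ) (v : m → ℂ) :
    (A * Matrix.vecMulVec v (star v)).trace = star v ⬝ᵥ A *ᵥ v := by
  simp only [Matrix.trace, Matrix.diag, Matrix.mul_apply, Matrix.vecMulVec_apply,
    dotProduct, Matrix.mulVec, Pi.star_apply, Finset.mul_sum]
  exact Finset.sum_congr rfl fun i _ => Finset.sum_congr rfl fun j _ => by ring

lemma herm_quad_conj {m : Type*} [Fintype m] {A : Matrix m m ℂ} (hA : A.IsHermitian)
    (v : m → ℂ) : star (star v ⬝ᵥ A *ᵥ v) = star v ⬝ᵥ A *ᵥ v := by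
  calc star (star v ⬝ᵥ A *ᵥ v) = star (A *ᵥ v) ⬝ᵥ star (star v) :=
        (Matrix.star_dotProduct_star (A *ᵥ v) (star v)).symm
    _ = star (A *ᵥ v) ⬝ᵥ v := by rw [star_star]
    _ = (star v ᵥ* A) ⬝ᵥ v := by rw [Matrix.star_mulVec, hA.eq]
    _ = star v ⬝ᵥ A *ᵥ v := (Matrix.dotProduct_mulVec _ _ _).symm

lemma smul_psd {m : Type*} [Fintype m] {M : Matrix m m ℂ} (hM : M.PosSemidef) {c : ℝ}
    (hc : 0 ≤ c) : ((c : ℂ) • M).PosSemidef := by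
  refine Matrix.PosSemidef.of_dotProduct_mulVec_nonneg ?_ ?_
  · unfold Matrix.IsHermitian
    rw [Matrix.conjTranspose_smul, hM.1.eq]
    congr 1
    simp [Complex.star_def]
  · intro x
    rw [Matrix.smul_mulVec, dotProduct_smul, smul_eq_mul]
    exact mul_nonneg (by exact_mod_cast hc) (hM.dotProduct_mulVec_nonneg x)

lemma vecMulVec_psd {m : Type*} [Fintype m] [DecidableEq m] (v : m → ℂ) :
    (Matrix.vecMulVec v (star v)).PosSemidef := by
  rw [Matrix.vecMulVec_eq Unit, ← Matrix.conjTranspose_replicateCol]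
  exact Matrix.posSemidef_self_mul_conjTranspose _

end Compat
open Matrix BigOperators
open scoped ComplexOrder

/-- a tuple `W ∈ O` is a compatibility witness iff
`p(W) = Σ_i W_i ⊗ 1_i` is positive semidefinite. -/
theorem isWitness_iff_pW_posSemidef {n : ℕ} (d : Fin n → ℕ) (hn : 2 ≤ n) (hd : ∀ i, 1 ≤ d i)
    (W : Compat.Tuple d) (hherm : Compat.IsHermTuple d W) :
    (∀ ρ, Compat.MemC d ρ → 0 ≤ Compat.cwip d W ρ) ↔ (Compat.pW d W).PosSemidef := by
  constructor
  · intro hW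
    refine Matrix.PosSemidef.of_dotProduct_mulVec_nonneg (Compat.pW_isHermitian d hherm) fun v => ?_
    by_cases hv : v = 0
    · simp [hv]
    · set S : ℝ := ∑ X, Complex.normSq (v X) with hS
      have hSpos : 0 < S := by
        obtain ⟨X, hX⟩ := Function.ne_iff.mp hv
        exact Finset.sum_pos' (fun i _ => Complex.normSq_nonneg _)
          ⟨X, Finset.mem_univ X, Complex.normSq_pos.mpr hX⟩
      set ρ : Matrix (Compat.Idx d) (Compat.Idx d) ℂ :=
        ((S⁻¹ : ℝ) : ℂ) • Matrix.vecMulVec v (star v) with hρ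
      have hpsd : ρ.PosSemidef :=
        Compat.smul_psd (Compat.vecMulVec_psd v) (inv_nonneg.mpr hSpos.le)
      have htrvv : (Matrix.vecMulVec v (star v)).trace = (S : ℂ) := by
        simp [Matrix.trace, Matrix.diag, Matrix.vecMulVec_apply, hS, Complex.mul_conj]
      have htr : ρ.trace = 1 := by
        rw [hρ, Matrix.trace_smul, htrvv, smul_eq_mul, ← Complex.ofReal_mul,
          inv_mul_cancel₀ hSpos.ne', Complex.ofReal_one]
      have hmem : Compat.MemC d (fun i => Compat.reduce d ({i}ᶜ) ρ) :=
        ⟨ρ, ⟨hpsd, htr⟩, fun _ => rfl⟩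
      have h0 := hW _ hmem
      rw [Compat.cwip_reduce] at h0
      have htrace : (Compat.pW d W * ρ).trace
          = ((S⁻¹ : ℝ) : ℂ) * (star v ⬝ᵥ Compat.pW d W *ᵥ v) := by
        rw [hρ, Matrix.mul_smul, Matrix.trace_smul, Compat.trace_mul_vecMulVec, smul_eq_mul]
      set q := star v ⬝ᵥ Compat.pW d W *ᵥ v with hq
      have hstar : star q = q := Compat.herm_quad_conj (Compat.pW_isHermitian d hherm) v
      have him : q.im = 0 := by
        have := congrArg Complex.im hstar
        simp only [Complex.star_def, Complex.conj_im] at this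
        linarith
      have hre : 0 ≤ q.re := by
        rw [htrace] at h0
        have hre' : (((S⁻¹ : ℝ) : ℂ) * q).re = S⁻¹ * q.re := by
          simp [Complex.mul_re, Complex.ofReal_re, Complex.ofReal_im]
        rw [hre'] at h0
        exact (mul_nonneg_iff_of_pos_left (inv_pos.mpr hSpos)).mp h0
      rw [Complex.le_def]
      simp [hre, him]
  · rintro hpos σ ⟨ρ, ⟨hpsd, -⟩, hσ⟩
    have hσ' : σ = fun i => Compat.reduce d ({i}ᶜ) ρ := funext hσ
    rw [hσ', Compat.cwip_reduce]
    have h := Compat.trace_mul_psd_nonneg hpos hpsd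
    simpa using (Complex.le_def.mp h).1
end

section
/- Let Z be a positive semidefinite operator on H such that Tr(Z · (T_1 ⊗ ⋯ ⊗ T_n)) = 0 whenever T_1, …, T_n are operators on H_1, …, H_n respectively with Tr(T_i) = 0 for every i. Then Z = p(W) for some compatibility witness W ∈ O. -/
open Matrix BigOperators
open scoped ComplexOrder

namespace CompatAux

open Matrix Finset
open scoped ComplexOrder

variable {n : ℕ} (d : Fin n → ℕ)

lemma glue_of_mem {B : Finset (Fin n)} (x : Compat.SubIdx d B) (z : Compat.SubIdx d Bᶜ)
    {i : Fin n} (h : i ∈ B) : Compat.glue d B x z i = x ⟨i, h⟩ := dif_pos h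

lemma glue_of_not_mem {B : Finset (Fin n)} (x : Compat.SubIdx d B) (z : Compat.SubIdx d Bᶜ)
    {i : Fin n} (h : i ∉ B) : Compat.glue d B x z i = z ⟨i, Finset.mem_compl.mpr h⟩ :=
  dif_neg h

/-- The split equivalence `Idx d ≃ SubIdx d B × SubIdx d Bᶜ`. -/
def splitEquiv (B : Finset (Fin n)) : Compat.Idx d ≃ Compat.SubIdx d B × Compat.SubIdx d Bᶜ where
  toFun m := (fun i => m i.1, fun i => m i.1)
  invFun p := Compat.glue d B p.1 p.2
  left_inv m := by
    funext i
    by_cases h : i ∈ B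
    · exact dif_pos h
    · exact dif_neg h
  right_inv p := by
    refine Prod.ext (funext fun i => ?_) (funext fun i => ?_)
    · exact dif_pos i.2
    · exact dif_neg (Finset.mem_compl.mp i.2)

lemma sum_idx {M : Type*} [AddCommMonoid M] (B : Finset (Fin n)) (f : Compat.Idx d → M) :
    ∑ u, f u = ∑ x : Compat.SubIdx d B, ∑ z : Compat.SubIdx d Bᶜ,
      f (Compat.glue d B x z) := by
  calc ∑ u, f u = ∑ p : Compat.SubIdx d B × Compat.SubIdx d Bᶜ,
      f (Compat.glue d B p.1 p.2) :=
        Fintype.sum_equiv (splitEquiv d B) f _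
          (fun u => congrArg f ((splitEquiv d B).left_inv u).symm)
    _ = _ := Fintype.sum_prod_type _

lemma prod_ite_zero {ι : Type*} (s : Finset ι) (p : ι → Prop) [DecidablePred p] (f : ι → ℂ) :
    ∏ i ∈ s, (if p i then f i else 0) = if ∀ i ∈ s, p i then ∏ i ∈ s, f i else 0 := by
  by_cases h : ∀ i ∈ s, p i
  · rw [if_pos h]
    exact Finset.prod_congr rfl fun i hi => if_pos (h i hi)
  · rw [if_neg h]
    push_neg at h
    obtain ⟨i, hi, hpi⟩ := h
    exact Finset.prod_eq_zero hi (if_neg hpi)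

lemma trace_embed_mul (B : Finset (Fin n)) (W : Matrix (Compat.SubIdx d B) (Compat.SubIdx d B) ℂ)
    (ρ : Matrix (Compat.Idx d) (Compat.Idx d) ℂ) :
    (Compat.embed d B W * ρ).trace = (W * Compat.reduce d B ρ).trace := by
  have hL : (Compat.embed d B W * ρ).trace
      = ∑ u : Compat.Idx d, ∑ v : Compat.Idx d, Compat.embed d B W u v * ρ v u := by
    simp [Matrix.trace, Matrix.diag, Matrix.mul_apply]
  rw [hL, sum_idx d B (f := fun u => ∑ v, Compat.embed d B W u v * ρ v u)]
  have hinner : ∀ (x : Compat.SubIdx d B) (z : Compat.SubIdx d Bᶜ),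
      (∑ v : Compat.Idx d, Compat.embed d B W (Compat.glue d B x z) v * ρ v (Compat.glue d B x z))
      = ∑ y : Compat.SubIdx d B, W x y * ρ (Compat.glue d B y z) (Compat.glue d B x z) := by
    intro x z
    rw [sum_idx d B (f := fun v => Compat.embed d B W (Compat.glue d B x z) v
        * ρ v (Compat.glue d B x z))]
    refine Finset.sum_congr rfl fun y _ => ?_
    have hE : ∀ z' : Compat.SubIdx d Bᶜ,
        Compat.embed d B W (Compat.glue d B x z) (Compat.glue d B y z')
        = if z' = z then W x y else 0 := by
      intro z'
      unfold Compat.embed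
      have h1 : (fun i : {i // i ∈ B} => Compat.glue d B x z i.1) = x :=
        funext fun i => glue_of_mem d x z i.2
      have h2 : (fun i : {i // i ∈ B} => Compat.glue d B y z' i.1) = y :=
        funext fun i => glue_of_mem d y z' i.2
      have hiff : (∀ i ∈ Bᶜ, Compat.glue d B x z i = Compat.glue d B y z' i) ↔ z' = z := by
        constructor
        · intro h
          funext i
          have := h i.1 i.2
          rw [glue_of_not_mem d x z (Finset.mem_compl.mp i.2),
            glue_of_not_mem d y z' (Finset.mem_compl.mp i.2)] at this
          exact this.symm
        · rintro rfl i hi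
          rw [glue_of_not_mem d x _ (Finset.mem_compl.mp hi),
            glue_of_not_mem d y _ (Finset.mem_compl.mp hi)]
      exact if_congr hiff (congrArg₂ W h1 h2) rfl
    calc ∑ z' : Compat.SubIdx d Bᶜ,
          Compat.embed d B W (Compat.glue d B x z) (Compat.glue d B y z')
            * ρ (Compat.glue d B y z') (Compat.glue d B x z)
        = ∑ z' : Compat.SubIdx d Bᶜ, (if z' = z then
            W x y * ρ (Compat.glue d B y z') (Compat.glue d B x z) else 0) := by
          refine Finset.sum_congr rfl fun z' _ => ?_
          rw [hE z']
          split_ifs <;> simp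
      _ = W x y * ρ (Compat.glue d B y z) (Compat.glue d B x z) := by
          rw [Finset.sum_ite_eq' Finset.univ z]
          simp
  have hR : (W * Compat.reduce d B ρ).trace
      = ∑ x : Compat.SubIdx d B, ∑ z : Compat.SubIdx d Bᶜ, ∑ y : Compat.SubIdx d B,
          W x y * ρ (Compat.glue d B y z) (Compat.glue d B x z) := by
    simp only [Matrix.trace, Matrix.diag, Matrix.mul_apply, Compat.reduce, Finset.mul_sum]
    refine Finset.sum_congr rfl fun x _ => ?_
    rw [Finset.sum_comm]
  rw [hR]
  exact Finset.sum_congr rfl fun x _ => Finset.sum_congr rfl fun z _ => hinner x z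

lemma embed_univ (Z : Matrix (Compat.Idx d) (Compat.Idx d) ℂ) :
    Compat.embed d Finset.univ (Compat.reduce d Finset.univ Z) = Z := by
  haveI : Unique (Compat.SubIdx d (Finset.univ : Finset (Fin n))ᶜ) :=
    { default := fun j => absurd j.2 (by simp)
      uniq := fun z => funext fun j => absurd j.2 (by simp) }
  funext x y
  unfold Compat.embed Compat.reduce
  rw [if_pos (by simp)]
  rw [Fintype.sum_unique]
  have hg : ∀ (w : Compat.Idx d) (z : Compat.SubIdx d (Finset.univ : Finset (Fin n))ᶜ),
      Compat.glue d Finset.univ (fun i => w i.1) z = w :=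
    fun w z => funext fun i => glue_of_mem d _ _ (Finset.mem_univ i)
  rw [hg, hg]

/-- Collapse of the double sum with the combined condition, giving `embed A (reduce A Z)`. -/
lemma collapse (A : Finset (Fin n)) (Z : Matrix (Compat.Idx d) (Compat.Idx d) ℂ)
    (x y : Compat.Idx d) :
    (∑ u : Compat.Idx d, ∑ v : Compat.Idx d,
      (if (∀ i ∈ A, y i = v i ∧ x i = u i) ∧ (∀ i ∈ Aᶜ, x i = y i ∧ v i = u i)
        then Z u v else 0))
      = Compat.embed d A (Compat.reduce d A Z) x y := by
  classical
  set X : Compat.SubIdx d A := fun i => x i.1 with hX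
  set Y : Compat.SubIdx d A := fun i => y i.1 with hY
  have hcond : ∀ (ux : Compat.SubIdx d A) (uz : Compat.SubIdx d Aᶜ)
      (vx : Compat.SubIdx d A) (vz : Compat.SubIdx d Aᶜ),
      ((∀ i ∈ A, y i = Compat.glue d A vx vz i ∧ x i = Compat.glue d A ux uz i) ∧
        (∀ i ∈ Aᶜ, x i = y i ∧ Compat.glue d A vx vz i = Compat.glue d A ux uz i))
      ↔ (vx = Y ∧ ux = X ∧ vz = uz ∧ ∀ i ∈ Aᶜ, x i = y i) := by
    intro ux uz vx vz
    constructor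
    · rintro ⟨h1, h2⟩
      refine ⟨funext fun i => ?_, funext fun i => ?_, funext fun i => ?_,
        fun i hi => (h2 i hi).1⟩
      · have := (h1 i.1 i.2).1
        rw [glue_of_mem d vx vz i.2] at this
        exact this.symm
      · have := (h1 i.1 i.2).2
        rw [glue_of_mem d ux uz i.2] at this
        exact this.symm
      · have := (h2 i.1 i.2).2
        rw [glue_of_not_mem d vx vz (Finset.mem_compl.mp i.2),
          glue_of_not_mem d ux uz (Finset.mem_compl.mp i.2)] at this
        exact this
    · rintro ⟨hvx, hux, hvz, hxy⟩
      constructor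
      · intro i hi
        rw [glue_of_mem d vx vz hi, glue_of_mem d ux uz hi, hvx, hux]
        exact ⟨rfl, rfl⟩
      · intro i hi
        rw [glue_of_not_mem d vx vz (Finset.mem_compl.mp hi),
          glue_of_not_mem d ux uz (Finset.mem_compl.mp hi), hvz]
        exact ⟨hxy i hi, rfl⟩
  rw [sum_idx d A (f := fun u => ∑ v : Compat.Idx d,
    (if (∀ i ∈ A, y i = v i ∧ x i = u i) ∧ (∀ i ∈ Aᶜ, x i = y i ∧ v i = u i)
      then Z u v else 0))]
  have step1 : ∀ (ux : Compat.SubIdx d A) (uz : Compat.SubIdx d Aᶜ),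
      (∑ v : Compat.Idx d,
        (if (∀ i ∈ A, y i = v i ∧ x i = Compat.glue d A ux uz i) ∧
            (∀ i ∈ Aᶜ, x i = y i ∧ v i = Compat.glue d A ux uz i)
          then Z (Compat.glue d A ux uz) v else 0))
      = if ux = X ∧ ∀ i ∈ Aᶜ, x i = y i
          then Z (Compat.glue d A ux uz) (Compat.glue d A Y uz) else 0 := by
    intro ux uz
    rw [sum_idx d A (f := fun v =>
      (if (∀ i ∈ A, y i = v i ∧ x i = Compat.glue d A ux uz i) ∧
          (∀ i ∈ Aᶜ, x i = y i ∧ v i = Compat.glue d A ux uz i)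
        then Z (Compat.glue d A ux uz) v else 0))]
    have hsum : ∀ vx : Compat.SubIdx d A,
        (∑ vz : Compat.SubIdx d Aᶜ,
          (if (∀ i ∈ A, y i = Compat.glue d A vx vz i ∧ x i = Compat.glue d A ux uz i) ∧
              (∀ i ∈ Aᶜ, x i = y i ∧ Compat.glue d A vx vz i = Compat.glue d A ux uz i)
            then Z (Compat.glue d A ux uz) (Compat.glue d A vx vz) else 0))
        = if vx = Y ∧ ux = X ∧ ∀ i ∈ Aᶜ, x i = y i
            then Z (Compat.glue d A ux uz) (Compat.glue d A vx uz) else 0 := by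
      intro vx
      have : ∀ vz : Compat.SubIdx d Aᶜ,
          (if (∀ i ∈ A, y i = Compat.glue d A vx vz i ∧ x i = Compat.glue d A ux uz i) ∧
              (∀ i ∈ Aᶜ, x i = y i ∧ Compat.glue d A vx vz i = Compat.glue d A ux uz i)
            then Z (Compat.glue d A ux uz) (Compat.glue d A vx vz) else 0)
          = if vz = uz ∧ vx = Y ∧ ux = X ∧ ∀ i ∈ Aᶜ, x i = y i
              then Z (Compat.glue d A ux uz) (Compat.glue d A vx vz) else 0 := by
        intro vz
        refine if_congr ?_ rfl rfl
        rw [hcond ux uz vx vz]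
        tauto
      simp only [this]
      rw [Finset.sum_eq_single uz (fun b _ hb => if_neg fun hc => hb hc.1)
        (fun h => absurd (Finset.mem_univ uz) h)]
      exact if_congr (by tauto) rfl rfl
    simp only [hsum]
    rw [Finset.sum_eq_single Y (fun b _ hb => if_neg fun hc => hb hc.1)
      (fun h => absurd (Finset.mem_univ Y) h)]
    exact if_congr (by tauto) rfl rfl
  simp only [step1]
  rw [Finset.sum_comm]
  have hcol : ∀ uz : Compat.SubIdx d Aᶜ,
      (∑ ux : Compat.SubIdx d A,
        (if ux = X ∧ ∀ i ∈ Aᶜ, x i = y i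
          then Z (Compat.glue d A ux uz) (Compat.glue d A Y uz) else 0))
      = if ∀ i ∈ Aᶜ, x i = y i
          then Z (Compat.glue d A X uz) (Compat.glue d A Y uz) else 0 := by
    intro uz
    rw [Finset.sum_eq_single X (fun b _ hb => if_neg fun hc => hb hc.1)
      (fun h => absurd (Finset.mem_univ X) h)]
    exact if_congr (by tauto) rfl rfl
  simp only [hcol]
  unfold Compat.embed Compat.reduce
  by_cases hQ : ∀ i ∈ Aᶜ, x i = y i
  · simp only [if_pos hQ, hX, hY]
  · simp only [if_neg hQ, Finset.sum_const_zero]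



lemma ite_inst {c : Prop} {α : Sort*} (i1 i2 : Decidable c) (a b : α) :
    @ite α c i1 a b = @ite α c i2 a b := by
  congr 1

/-- The auxiliary factor taken on the "kept" coordinates. -/
noncomputable def aa (x y u v : Compat.Idx d) (i : Fin n) : ℂ :=
  if y i = v i ∧ x i = u i then 1 else 0

/-- The auxiliary factor taken on the "traced" coordinates. -/
noncomputable def bb (x y u v : Compat.Idx d) (i : Fin n) : ℂ :=
  -(if x i = y i ∧ v i = u i then ((d i : ℂ))⁻¹ else 0)

/-- Key inclusion–exclusion identity. -/
lemma key (hd : ∀ i, 1 ≤ d i) (Z : Matrix (Compat.Idx d) (Compat.Idx d) ℂ)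
    (hvan : ∀ T : ∀ i, Matrix (Fin (d i)) (Fin (d i)) ℂ, (∀ i, (T i).trace = 0) →
      (Z * Compat.tensorAll d T).trace = 0) (x y : Compat.Idx d) :
    Z x y = ∑ A ∈ Finset.univ.filter (fun A : Finset (Fin n) => A ≠ Finset.univ),
      (-1 : ℂ) ^ (Aᶜ.card + 1) * (∏ i ∈ Aᶜ, (d i : ℂ))⁻¹ *
        Compat.embed d A (Compat.reduce d A Z) x y := by
  classical
  set T : ∀ i, Matrix (Fin (d i)) (Fin (d i)) ℂ := fun i =>
    Matrix.single (y i) (x i) 1 - (if x i = y i then ((d i : ℂ))⁻¹ else 0) • 1 with hT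
  have htr : ∀ i, (T i).trace = 0 := by
    intro i
    have hdne : ((d i : ℂ)) ≠ 0 := Nat.cast_ne_zero.mpr (Nat.one_le_iff_ne_zero.mp (hd i))
    have h1 : (Matrix.single (y i) (x i) (1 : ℂ)).trace
        = if x i = y i then 1 else 0 := by
      simp only [Matrix.trace, Matrix.diag, Matrix.single, Matrix.of_apply, ite_and]
      rw [Finset.sum_ite_eq Finset.univ (y i)
        (fun k => if x i = k then (1:ℂ) else 0)]
      simp [eq_comm]
    rw [hT]
    rw [Matrix.trace_sub, h1, Matrix.trace_smul, Matrix.trace_one]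
    by_cases h : x i = y i
    · simp [h, Fintype.card_fin, inv_mul_cancel₀ hdne]
    · simp [h]
  have h0 := hvan T htr
  have hTapp : ∀ (u v : Compat.Idx d) (i : Fin n),
      T i (v i) (u i) = aa d x y u v i + bb d x y u v i := by
    intro u v i
    rw [hT]
    unfold aa bb
    simp only [Matrix.sub_apply, Matrix.smul_apply, Matrix.one_apply, smul_eq_mul,
      Matrix.single, Matrix.of_apply]
    by_cases h1 : x i = y i <;> by_cases h2 : v i = u i <;>
      simp [h1, h2, sub_eq_add_neg]
  have hexp : (Z * Compat.tensorAll d T).trace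
      = ∑ A : Finset (Fin n), ∑ u : Compat.Idx d, ∑ v : Compat.Idx d,
          Z u v * ((∏ i ∈ A, aa d x y u v i) * ∏ i ∈ Aᶜ, bb d x y u v i) := by
    have e1 : (Z * Compat.tensorAll d T).trace
        = ∑ u : Compat.Idx d, ∑ v : Compat.Idx d, Z u v * ∏ i, T i (v i) (u i) := by
      simp [Matrix.trace, Matrix.diag, Matrix.mul_apply, Compat.tensorAll]
    rw [e1]
    have e2 : ∀ (u v : Compat.Idx d),
        Z u v * ∏ i, T i (v i) (u i)
        = ∑ A : Finset (Fin n),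
            Z u v * ((∏ i ∈ A, aa d x y u v i) * ∏ i ∈ Aᶜ, bb d x y u v i) := by
      intro u v
      rw [← Finset.mul_sum, ← Fintype.prod_add]
      exact congrArg (Z u v * ·) (Finset.prod_congr rfl fun i _ => hTapp u v i)
    calc ∑ u : Compat.Idx d, ∑ v : Compat.Idx d, Z u v * ∏ i, T i (v i) (u i)
        = ∑ u : Compat.Idx d, ∑ A : Finset (Fin n), ∑ v : Compat.Idx d,
            Z u v * ((∏ i ∈ A, aa d x y u v i) * ∏ i ∈ Aᶜ, bb d x y u v i) := by
          refine Finset.sum_congr rfl fun u _ => ?_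
          rw [← Finset.sum_comm]
          exact Finset.sum_congr rfl fun v _ => e2 u v
      _ = _ := Finset.sum_comm
  have perA : ∀ A : Finset (Fin n),
      (∑ u : Compat.Idx d, ∑ v : Compat.Idx d,
        Z u v * ((∏ i ∈ A, aa d x y u v i) * ∏ i ∈ Aᶜ, bb d x y u v i))
      = (-1 : ℂ) ^ (Aᶜ.card) * (∏ i ∈ Aᶜ, (d i : ℂ))⁻¹ *
          Compat.embed d A (Compat.reduce d A Z) x y := by
    intro A
    have hsummand : ∀ u v : Compat.Idx d,
        Z u v * ((∏ i ∈ A, aa d x y u v i) * ∏ i ∈ Aᶜ, bb d x y u v i)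
        = (-1 : ℂ) ^ (Aᶜ.card) * (∏ i ∈ Aᶜ, (d i : ℂ))⁻¹ *
          (if (∀ i ∈ A, y i = v i ∧ x i = u i) ∧ (∀ i ∈ Aᶜ, x i = y i ∧ v i = u i)
            then Z u v else 0) := by
      intro u v
      have hA1 : (∏ i ∈ A, aa d x y u v i)
          = if (∀ i ∈ A, y i = v i ∧ x i = u i) then 1 else 0 := by
        unfold aa
        rw [Finset.prod_boole]
        exact ite_inst _ _ _ _
      have hB1 : (∏ i ∈ Aᶜ, bb d x y u v i)
          = (-1 : ℂ) ^ (Aᶜ.card) * (if (∀ i ∈ Aᶜ, x i = y i ∧ v i = u i)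
              then ∏ i ∈ Aᶜ, ((d i : ℂ))⁻¹ else 0) := by
        calc ∏ i ∈ Aᶜ, bb d x y u v i
            = ∏ i ∈ Aᶜ, ((-1) * (if x i = y i ∧ v i = u i then ((d i : ℂ))⁻¹ else 0)) :=
              Finset.prod_congr rfl fun i _ => (neg_one_mul _).symm
          _ = (-1 : ℂ) ^ (Aᶜ.card) *
              ∏ i ∈ Aᶜ, (if x i = y i ∧ v i = u i then ((d i : ℂ))⁻¹ else 0) := by
              rw [Finset.prod_mul_distrib, Finset.prod_const]
          _ = _ := by
              rw [prod_ite_zero]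
              exact congrArg (fun t => (-1 : ℂ) ^ (Aᶜ.card) * t) (ite_inst _ _ _ _)
      rw [hA1, hB1]
      by_cases hc1 : (∀ i ∈ A, y i = v i ∧ x i = u i)
      · rw [if_pos hc1]
        by_cases hc2 : (∀ i ∈ Aᶜ, x i = y i ∧ v i = u i)
        · rw [if_pos hc2, if_pos (⟨hc1, hc2⟩ :
            (∀ i ∈ A, y i = v i ∧ x i = u i) ∧ (∀ i ∈ Aᶜ, x i = y i ∧ v i = u i)),
            Finset.prod_inv_distrib]
          ring
        · rw [if_neg hc2, if_neg (fun hh : (∀ i ∈ A, y i = v i ∧ x i = u i) ∧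
            (∀ i ∈ Aᶜ, x i = y i ∧ v i = u i) => hc2 hh.2)]
          ring
      · rw [if_neg hc1]
        by_cases hc2 : (∀ i ∈ Aᶜ, x i = y i ∧ v i = u i)
        · rw [if_pos hc2, if_neg (fun hh : (∀ i ∈ A, y i = v i ∧ x i = u i) ∧
            (∀ i ∈ Aᶜ, x i = y i ∧ v i = u i) => hc1 hh.1)]
          ring
        · rw [if_neg hc2, if_neg (fun hh : (∀ i ∈ A, y i = v i ∧ x i = u i) ∧
            (∀ i ∈ Aᶜ, x i = y i ∧ v i = u i) => hc1 hh.1)]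
          ring
    calc (∑ u : Compat.Idx d, ∑ v : Compat.Idx d,
          Z u v * ((∏ i ∈ A, aa d x y u v i) * ∏ i ∈ Aᶜ, bb d x y u v i))
        = ∑ u : Compat.Idx d, ∑ v : Compat.Idx d,
            (-1 : ℂ) ^ (Aᶜ.card) * (∏ i ∈ Aᶜ, (d i : ℂ))⁻¹ *
            (if (∀ i ∈ A, y i = v i ∧ x i = u i) ∧ (∀ i ∈ Aᶜ, x i = y i ∧ v i = u i)
              then Z u v else 0) :=
          Finset.sum_congr rfl fun u _ => Finset.sum_congr rfl fun v _ => hsummand u v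
      _ = (-1 : ℂ) ^ (Aᶜ.card) * (∏ i ∈ Aᶜ, (d i : ℂ))⁻¹ *
          ∑ u : Compat.Idx d, ∑ v : Compat.Idx d,
            (if (∀ i ∈ A, y i = v i ∧ x i = u i) ∧ (∀ i ∈ Aᶜ, x i = y i ∧ v i = u i)
              then Z u v else 0) := by
          rw [Finset.mul_sum]
          exact Finset.sum_congr rfl fun u _ => (Finset.mul_sum _ _ _).symm
      _ = _ := by rw [collapse]
  have h0' : (∑ A : Finset (Fin n), (-1 : ℂ) ^ (Aᶜ.card) * (∏ i ∈ Aᶜ, (d i : ℂ))⁻¹ *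
      Compat.embed d A (Compat.reduce d A Z) x y) = 0 := by
    calc (∑ A : Finset (Fin n), (-1 : ℂ) ^ (Aᶜ.card) * (∏ i ∈ Aᶜ, (d i : ℂ))⁻¹ *
        Compat.embed d A (Compat.reduce d A Z) x y)
        = ∑ A : Finset (Fin n), ∑ u : Compat.Idx d, ∑ v : Compat.Idx d,
            Z u v * ((∏ i ∈ A, aa d x y u v i) * ∏ i ∈ Aᶜ, bb d x y u v i) :=
          Finset.sum_congr rfl fun A _ => (perA A).symm
      _ = (Z * Compat.tensorAll d T).trace := hexp.symm
      _ = 0 := h0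
  rw [← Finset.add_sum_erase Finset.univ _
    (Finset.mem_univ (Finset.univ : Finset (Fin n)))] at h0'
  have huniv : (-1 : ℂ) ^ ((Finset.univ : Finset (Fin n))ᶜ.card) *
      (∏ i ∈ (Finset.univ : Finset (Fin n))ᶜ, (d i : ℂ))⁻¹ *
      Compat.embed d Finset.univ (Compat.reduce d Finset.univ Z) x y = Z x y := by
    rw [Finset.compl_univ, embed_univ d Z]
    simp
  rw [huniv] at h0'
  rw [Finset.filter_ne']
  refine (eq_neg_of_add_eq_zero_left h0').trans ?_
  rw [← Finset.sum_neg_distrib]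
  exact Finset.sum_congr rfl fun A _ => by ring


/-- Embed an operator acting on the factors in `A`, with `i ∉ A`, into an operator
on `H^(i)` (identity on the factors other than those of `A`). -/
noncomputable def embedWithin (i : Fin n) (A : Finset (Fin n))
    (M : Matrix (Compat.SubIdx d A) (Compat.SubIdx d A) ℂ) :
    Matrix (Compat.RedIdx d i) (Compat.RedIdx d i) ℂ :=
  fun x y =>
    if h : i ∉ A then
      (if (∀ j : {j // j ∈ ({i}ᶜ : Finset (Fin n))}, j.1 ∉ A → x j = y j) then
        M (fun k => x ⟨k.1, Finset.mem_compl.mpr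
            (fun hk => h ((Finset.mem_singleton.mp hk) ▸ k.2))⟩)
          (fun k => y ⟨k.1, Finset.mem_compl.mpr
            (fun hk => h ((Finset.mem_singleton.mp hk) ▸ k.2))⟩)
      else 0)
    else 0

lemma embed_embedWithin (i : Fin n) (A : Finset (Fin n)) (hi : i ∉ A)
    (M : Matrix (Compat.SubIdx d A) (Compat.SubIdx d A) ℂ) :
    Compat.embed d ({i}ᶜ) (embedWithin d i A M) = Compat.embed d A M := by
  funext x y
  have hiAc : i ∈ Aᶜ := Finset.mem_compl.mpr hi
  show (if ∀ j ∈ (({i}ᶜ : Finset (Fin n)))ᶜ, x j = y j then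
      embedWithin d i A M (fun j => x j.1) (fun j => y j.1) else 0)
    = if ∀ j ∈ Aᶜ, x j = y j then
        M (fun k => x k.1) (fun k => y k.1) else 0
  unfold embedWithin
  rw [dif_pos hi]
  have hmem : ∀ j : Fin n, j ∈ (({i}ᶜ : Finset (Fin n)))ᶜ ↔ j = i := by
    intro j; simp
  by_cases h3 : ∀ j ∈ Aᶜ, x j = y j
  · rw [if_pos h3]
    rw [if_pos (fun j hj => h3 j (by
      rw [hmem j] at hj
      rw [hj]; exact hiAc))]
    rw [if_pos (fun (j : {j // j ∈ ({i}ᶜ : Finset (Fin n))}) (hjA : j.1 ∉ A) =>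
      h3 j.1 (Finset.mem_compl.mpr hjA))]
  · rw [if_neg h3]
    by_cases h1 : ∀ j ∈ (({i}ᶜ : Finset (Fin n)))ᶜ, x j = y j
    · rw [if_pos h1]
      rw [if_neg ?_]
      intro h2
      apply h3
      intro j hj
      by_cases hji : j = i
      · rw [hji]; exact h1 i ((hmem i).mpr rfl)
      · exact h2 ⟨j, Finset.mem_compl.mpr (fun hs => hji (Finset.mem_singleton.mp hs))⟩
          (Finset.mem_compl.mp hj)
    · rw [if_neg h1]

lemma reduce_isHermitian (B : Finset (Fin n)) {Z : Matrix (Compat.Idx d) (Compat.Idx d) ℂ}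
    (h : Z.IsHermitian) : (Compat.reduce d B Z).IsHermitian := by
  apply Matrix.ext
  intro x y
  rw [Matrix.conjTranspose_apply]
  unfold Compat.reduce
  rw [star_sum]
  exact Finset.sum_congr rfl fun z _ => h.apply _ _

lemma embedWithin_isHermitian (i : Fin n) (A : Finset (Fin n))
    {M : Matrix (Compat.SubIdx d A) (Compat.SubIdx d A) ℂ} (hM : M.IsHermitian) :
    (embedWithin d i A M).IsHermitian := by
  apply Matrix.ext
  intro x y
  rw [Matrix.conjTranspose_apply]
  unfold embedWithin
  by_cases h : i ∉ A
  · rw [dif_pos h, dif_pos h]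
    have hsym : (∀ j : {j // j ∈ ({i}ᶜ : Finset (Fin n))}, j.1 ∉ A → y j = x j)
        ↔ (∀ j : {j // j ∈ ({i}ᶜ : Finset (Fin n))}, j.1 ∉ A → x j = y j) := by
      constructor <;> intro hh j hj <;> exact (hh j hj).symm
    by_cases hc : ∀ j : {j // j ∈ ({i}ᶜ : Finset (Fin n))}, j.1 ∉ A → x j = y j
    · rw [if_pos (hsym.mpr hc), if_pos hc]
      exact hM.apply _ _
    · rw [if_neg (fun hh => hc (hsym.mp hh)), if_neg hc, star_zero]
  · rw [dif_neg h, dif_neg h, star_zero]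

lemma embed_smul (B : Finset (Fin n)) (c : ℂ)
    (M : Matrix (Compat.SubIdx d B) (Compat.SubIdx d B) ℂ) :
    Compat.embed d B (c • M) = c • Compat.embed d B M := by
  funext x y
  show Compat.embed d B (c • M) x y = c • Compat.embed d B M x y
  unfold Compat.embed
  by_cases h : ∀ j ∈ Bᶜ, x j = y j
  · rw [if_pos h, if_pos h]
    rfl
  · rw [if_neg h, if_neg h, smul_zero]

lemma embed_sum {ι : Type*} (B : Finset (Fin n)) (s : Finset ι)
    (f : ι → Matrix (Compat.SubIdx d B) (Compat.SubIdx d B) ℂ) :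
    Compat.embed d B (∑ a ∈ s, f a) = ∑ a ∈ s, Compat.embed d B (f a) := by
  funext x y
  rw [Matrix.sum_apply]
  unfold Compat.embed
  by_cases h : ∀ j ∈ Bᶜ, x j = y j
  · rw [if_pos h, Matrix.sum_apply]
    exact Finset.sum_congr rfl fun a _ => (if_pos h).symm
  · rw [if_neg h]
    exact (Finset.sum_eq_zero fun a _ => if_neg h).symm

lemma regroup {M : Type*} [AddCommMonoid M] (g : Finset (Fin n) → M) :
    (∑ i : Fin n, ∑ A ∈ Finset.univ.filter
        (fun A : Finset (Fin n) => A ≠ Finset.univ ∧ i ∉ A ∧ ∀ j, j ∉ A → i ≤ j), g A)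
      = ∑ A ∈ Finset.univ.filter (fun A : Finset (Fin n) => A ≠ Finset.univ), g A := by
  classical
  simp only [Finset.sum_filter]
  rw [Finset.sum_comm]
  refine Finset.sum_congr rfl fun A _ => ?_
  by_cases hA : A = Finset.univ
  · simp [hA]
  · have hne : Aᶜ.Nonempty := Finset.nonempty_iff_ne_empty.mpr
      (fun h => hA ((Finset.compl_eq_empty_iff A).mp h))
    set i0 := Aᶜ.min' hne with hi0
    have hi0mem : i0 ∈ Aᶜ := Finset.min'_mem _ hne
    have hiff : ∀ i : Fin n, (A ≠ Finset.univ ∧ i ∉ A ∧ ∀ j, j ∉ A → i ≤ j) ↔ i = i0 := by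
      intro i
      constructor
      · rintro ⟨-, hiA, hmin⟩
        exact le_antisymm (hmin i0 (Finset.mem_compl.mp hi0mem))
          (Finset.min'_le _ _ (Finset.mem_compl.mpr hiA))
      · rintro rfl
        exact ⟨hA, Finset.mem_compl.mp hi0mem,
          fun j hj => Finset.min'_le _ _ (Finset.mem_compl.mpr hj)⟩
    calc (∑ i : Fin n, if A ≠ Finset.univ ∧ i ∉ A ∧ ∀ j, j ∉ A → i ≤ j then g A else 0)
        = ∑ i : Fin n, (if i = i0 then g A else 0) :=
          Finset.sum_congr rfl fun i _ => if_congr (hiff i) rfl rfl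
      _ = g A := by
          rw [Finset.sum_ite_eq' Finset.univ i0 (fun _ => g A)]
          simp
      _ = _ := (if_pos hA).symm

lemma psd_trace_nonneg {m : Type*} [Fintype m] [DecidableEq m] {M : Matrix m m ℂ}
    (hM : M.PosSemidef) : 0 ≤ M.trace := by
  rw [Matrix.trace]
  apply Finset.sum_nonneg
  intro i _
  exact hM.diag_nonneg

open scoped MatrixOrder in
lemma trace_mul_psd_nonneg {m : Type*} [Fintype m] [DecidableEq m] {A B : Matrix m m ℂ}
    (hA : A.PosSemidef) (hB : B.PosSemidef) : 0 ≤ (A * B).trace := by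
  have hs : (CFC.sqrt B).PosSemidef := (CFC.sqrt_nonneg B).posSemidef
  have hfact : A * B = A * CFC.sqrt B * CFC.sqrt B := by
    rw [mul_assoc, CFC.sqrt_mul_sqrt_self B hB.nonneg]
  have h1 : (A * B).trace = (CFC.sqrt B * A * CFC.sqrt B).trace := by
    rw [hfact, Matrix.trace_mul_comm, ← mul_assoc]
  rw [h1]
  have hpsd : (CFC.sqrt B * A * CFC.sqrt B).PosSemidef := by
    have h2 := hA.conjTranspose_mul_mul_same (CFC.sqrt B)
    rwa [hs.1] at h2
  exact psd_trace_nonneg hpsd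

end CompatAux

open Matrix BigOperators
open scoped ComplexOrder

/-- a positive semidefinite `Z` on `H` whose trace against every tensor
product of traceless one-system operators vanishes is of the form `Z = p(W)` for a
compatibility witness `W`. -/
theorem exists_witness_pW_eq_of_traceless_orth {n : ℕ} (d : Fin n → ℕ)
    (hn : 2 ≤ n) (hd : ∀ i, 1 ≤ d i)
    (Z : Matrix (Compat.Idx d) (Compat.Idx d) ℂ) (hZ : Z.PosSemidef)
    (hvan : ∀ T : ∀ i, Matrix (Fin (d i)) (Fin (d i)) ℂ, (∀ i, (T i).trace = 0) →
      (Z * Compat.tensorAll d T).trace = 0) :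
    ∃ W : Compat.Tuple d, Compat.IsWitness d W ∧ Compat.pW d W = Z := by
  classical
  set c : Finset (Fin n) → ℂ := fun A =>
    (-1 : ℂ) ^ (Aᶜ.card + 1) * (∏ j ∈ Aᶜ, (d j : ℂ))⁻¹ with hc
  set W : Compat.Tuple d := fun i =>
    ∑ A ∈ Finset.univ.filter
        (fun A : Finset (Fin n) => A ≠ Finset.univ ∧ i ∉ A ∧ ∀ j, j ∉ A → i ≤ j),
      c A • CompatAux.embedWithin d i A (Compat.reduce d A Z) with hW
  have hZh : Z.IsHermitian := hZ.1
  have hpW : Compat.pW d W = Z := by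
    unfold Compat.pW
    have step1 : ∀ i : Fin n, Compat.embed d ({i}ᶜ) (W i)
        = ∑ A ∈ Finset.univ.filter
            (fun A : Finset (Fin n) => A ≠ Finset.univ ∧ i ∉ A ∧ ∀ j, j ∉ A → i ≤ j),
          c A • Compat.embed d A (Compat.reduce d A Z) := by
      intro i
      rw [hW]
      rw [CompatAux.embed_sum]
      refine Finset.sum_congr rfl fun A hA => ?_
      have hiA : i ∉ A := ((Finset.mem_filter.mp hA).2).2.1
      rw [CompatAux.embed_smul, CompatAux.embed_embedWithin d i A hiA]
    calc (∑ i, Compat.embed d ({i}ᶜ) (W i))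
        = ∑ i : Fin n, ∑ A ∈ Finset.univ.filter
            (fun A : Finset (Fin n) => A ≠ Finset.univ ∧ i ∉ A ∧ ∀ j, j ∉ A → i ≤ j),
          c A • Compat.embed d A (Compat.reduce d A Z) :=
          Finset.sum_congr rfl fun i _ => step1 i
      _ = ∑ A ∈ Finset.univ.filter (fun A : Finset (Fin n) => A ≠ Finset.univ),
          c A • Compat.embed d A (Compat.reduce d A Z) := CompatAux.regroup _
      _ = Z := by
          apply Matrix.ext
          intro x y
          rw [Matrix.sum_apply]
          refine (Finset.sum_congr rfl fun A _ => ?_).trans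
            (CompatAux.key d hd Z hvan x y).symm
          rw [Matrix.smul_apply, smul_eq_mul, hc]
  have hHerm : Compat.IsHermTuple d W := by
    intro i
    rw [hW]
    unfold Matrix.IsHermitian
    rw [Matrix.conjTranspose_sum]
    refine Finset.sum_congr rfl fun A _ => ?_
    rw [Matrix.conjTranspose_smul]
    have h1 : (CompatAux.embedWithin d i A (Compat.reduce d A Z)).IsHermitian :=
      CompatAux.embedWithin_isHermitian d i A (CompatAux.reduce_isHermitian d A hZh)
    rw [h1.eq]
    congr 1
    rw [hc]
    simp [star_mul', star_pow, star_inv₀]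
  have hwit : ∀ σ, Compat.MemC d σ → 0 ≤ Compat.cwip d W σ := by
    intro σ hmem
    obtain ⟨ρ, ⟨hρpsd, hρtr⟩, hred⟩ := hmem
    have hsum : (∑ i, ((W i) * (σ i)).trace) = (Z * ρ).trace := by
      calc (∑ i, ((W i) * (σ i)).trace)
          = ∑ i, (Compat.embed d ({i}ᶜ) (W i) * ρ).trace := by
            refine Finset.sum_congr rfl fun i _ => ?_
            rw [hred i, ← CompatAux.trace_embed_mul]
        _ = ((∑ i, Compat.embed d ({i}ᶜ) (W i)) * ρ).trace := by
            rw [Matrix.sum_mul, Matrix.trace_sum]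
        _ = (Z * ρ).trace := by
            rw [show (∑ i, Compat.embed d ({i}ᶜ) (W i)) = Compat.pW d W from rfl, hpW]
    unfold Compat.cwip
    rw [hsum]
    have h0 : (0 : ℂ) ≤ (Z * ρ).trace := CompatAux.trace_mul_psd_nonneg hZ hρpsd
    have := (Complex.le_def.mp h0).1
    simpa using this
  exact ⟨W, ⟨hHerm, fun σ h => hwit σ h⟩, hpW⟩
end
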